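/- arXiv:1603.08244 — 4 statements merged into one kernel-verified Lean document; each statement's English description precedes it below -/
import Mathlib

section
/- Let W be a DMC with finite alphabets 𝒳, 𝒴, let P be a PMF on 𝒳, and let R satisfy 0 < R < I(P,W). Then there exist τ > 0 and n₀ ∈ ℕ such that for every blocklength n ≥ n₀ there exists an (n, ℳ, e^{−nτ}, e^{−nτ}) ID code for W with (1/n)·log log |ℳ| ≥ R. (Consequence of the paper's random pool-and-bins construction, Claim 1: the maximum probabilities of missed and wrong identification can be made to decay exponentially in n at every rate below I(P,W).) -/
open scoped Classical
open Finset

noncomputable section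

/-- `P` is a probability mass function on the finite type `X`. -/
def IsPMF {X : Type*} [Fintype X] (P : X → ℝ) : Prop :=
  (∀ x, 0 ≤ P x) ∧ ∑ x, P x = 1

/-- `W` is a (discrete memoryless) channel from `X` to `Y`. -/
def IsChannel {X Y : Type*} [Fintype Y] (W : X → Y → ℝ) : Prop :=
  (∀ x y, 0 ≤ W x y) ∧ ∀ x, ∑ y, W x y = 1

/-- The `n`-fold memoryless extension `W^n(𝐲|𝐱) = ∏ᵢ W(yᵢ|xᵢ)`. -/
def Wn {X Y : Type*} (W : X → Y → ℝ) (n : ℕ) (x : Fin n → X) (y : Fin n → Y) : ℝ :=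
  ∏ i, W (x i) (y i)

/-- Mutual information `I(P,W)` (natural logarithm), with the convention that
terms with `P x * W x y = 0` contribute `0`. -/
def mutInf {X Y : Type*} [Fintype X] [Fintype Y] (P : X → ℝ) (W : X → Y → ℝ) : ℝ :=
  ∑ x, ∑ y, if P x * W x y = 0 then 0
    else P x * W x y * Real.log (W x y / ∑ x', P x' * W x' y)

/-- The error requirements of an `(n, M, l1, l2)` ID code for the DMC `W`:
maximum probability of missed identification at most `l1`, maximum probability
of wrong identification at most `l2`. -/
def IDCodeErr {X Y M : Type*} [Fintype X] [Fintype Y]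
    (n : ℕ) (W : X → Y → ℝ) (Q : M → (Fin n → X) → ℝ)
    (D : M → Finset (Fin n → Y)) (l1 l2 : ℝ) : Prop :=
  (∀ m, ∑ x, Q m x * ∑ y ∈ (D m)ᶜ, Wn W n x y ≤ l1) ∧
  (∀ m m', m ≠ m' → ∑ x, Q m x * ∑ y ∈ D m', Wn W n x y ≤ l2)

/-- `(n, M, l1, l2)` ID code for the DMC `W`. -/
def IsIDCode {X Y M : Type*} [Fintype X] [Fintype Y]
    (n : ℕ) (W : X → Y → ℝ) (Q : M → (Fin n → X) → ℝ)
    (D : M → Finset (Fin n → Y)) (l1 l2 : ℝ) : Prop :=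
  (∀ m, IsPMF (Q m)) ∧ IDCodeErr n W Q D l1 l2

/-!
Random pool-and-bins coding. Fix `R < γ < I(P,W)`. A Chernoff bound on the information density
makes the output of a random codeword `x ~ P^n` atypical, i.e. `W^n(y|x) ≤ e^{nγ} (PW)^n(y)`,
with probability `e^{-nδ}`, while every typical set has `(PW)^n`-mass at most `e^{-nγ}`.
Take `τ > 0` with `2τ ≤ δ` and `4τ ≤ γ - R`. Every message owns a pool of about
`e^{n(R+2τ)}` i.i.d. codewords, sends one of them uniformly at random, and is accepted when the
output is typical for some codeword of its pool; a foreign pool is then hit with probability about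
`e^{-2nτ}`. A second Chernoff bound, over the independent codewords of a pool, makes each
pool-averaged error exceed `e^{-nτ}` with probability `exp (-e^{n(R+τ)}/2)`, small enough for a
union bound over the `exp (2 e^{nR})` pairs of messages.
-/

open Real

section iid

variable {V ι : Type*} [Fintype ι] [DecidableEq ι]

def iidLaw (p : V → ℝ) (ω : ι → V) : ℝ := ∏ i, p (ω i)

variable {p : V → ℝ}

lemma iidLaw_piSplitAt_symm (i : ι) (v : V) (ω : {k // k ≠ i} → V) :
    iidLaw p ((Equiv.piSplitAt i fun _ => V).symm (v, ω)) = p v * iidLaw p ω := by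
  rw [iidLaw, Fintype.prod_eq_mul_prod_subtype_ne _ i]
  simp only [Equiv.piSplitAt_symm_apply, dif_pos]
  congr 1
  exact Fintype.prod_congr _ _ fun k => by simp [k.2]

variable [Fintype V]

lemma isPMF_iidLaw (hp : IsPMF p) : IsPMF (iidLaw p : (ι → V) → ℝ) := by
  refine ⟨fun ω => prod_nonneg fun i _ => hp.1 _, ?_⟩
  simp only [iidLaw]
  rw [← Fintype.prod_sum]
  simp [hp.2]

lemma sum_iidLaw_mul_prod (g : ι → V → ℝ) :
    ∑ ω, iidLaw p ω * ∏ i, g i (ω i) = ∏ i, ∑ v, p v * g i v := by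
  simp only [iidLaw, ← prod_mul_distrib, Fintype.prod_sum]

lemma sum_iidLaw_mul_eq_sum_mul_sum (i : ι) (G : (ι → V) → ℝ) :
    ∑ ω, iidLaw p ω * G ω = ∑ v, p v * ∑ ω : {k // k ≠ i} → V,
      iidLaw p ω * G ((Equiv.piSplitAt i fun _ => V).symm (v, ω)) := by
  rw [← (Equiv.piSplitAt i fun _ => V).symm.sum_comp, Fintype.sum_prod_type]
  simp only [iidLaw_piSplitAt_symm, mul_sum, mul_assoc]

lemma sum_iidLaw_mul_apply (hp : IsPMF p) (i : ι) (g : V → ℝ) :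
    ∑ ω, iidLaw p ω * g (ω i) = ∑ v, p v * g v := by
  rw [sum_iidLaw_mul_eq_sum_mul_sum i]
  simp [Equiv.piSplitAt_symm_apply, ← sum_mul, (isPMF_iidLaw hp (ι := {k // k ≠ i})).2]

lemma sum_iidLaw_mul_apply_apply (hp : IsPMF p) {i j : ι} (hij : i ≠ j) (G : V → V → ℝ) :
    ∑ ω, iidLaw p ω * G (ω i) (ω j) = ∑ v, p v * ∑ w, p w * G v w := by
  rw [sum_iidLaw_mul_eq_sum_mul_sum i]
  refine sum_congr rfl fun v _ => ?_
  simp only [Equiv.piSplitAt_symm_apply, dif_pos, dif_neg hij.symm]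
  congr 1
  exact sum_iidLaw_mul_apply hp (⟨j, hij.symm⟩ : {k // k ≠ i}) (G v)

end iid

lemma exp_le_one_add_two_mul {z : ℝ} (h0 : 0 ≤ z) (h1 : z ≤ 1) : exp z ≤ 1 + 2 * z := by
  have hchord := convexOn_exp.2 (Set.mem_univ 0) (Set.mem_univ 1) (sub_nonneg.2 h1) h0
    (sub_add_cancel 1 z)
  simp only [smul_eq_mul, mul_zero, mul_one, zero_add, exp_zero] at hchord
  nlinarith [exp_one_lt_d9]

section chernoff

variable {V : Type*} [Fintype V] {p : V → ℝ}

lemma sum_mul_exp_le_exp (hp : IsPMF p) {F : V → ℝ} (hF : ∀ v, F v ∈ Set.Icc 0 1) :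
    ∑ v, p v * exp (F v) ≤ exp (2 * ∑ v, p v * F v) :=
  calc ∑ v, p v * exp (F v) ≤ ∑ v, p v * (1 + 2 * F v) :=
        sum_le_sum fun v _ => mul_le_mul_of_nonneg_left
          (exp_le_one_add_two_mul (hF v).1 (hF v).2) (hp.1 v)
    _ = 2 * ∑ v, p v * F v + 1 := by
        simp only [mul_add, mul_one, sum_add_distrib, hp.2, mul_sum]; ring_nf
    _ ≤ exp (2 * ∑ v, p v * F v) := add_one_le_exp _

lemma sum_iidLaw_lt_sum_le_exp (hp : IsPMF p) {F : V → ℝ} (hF : ∀ v, F v ∈ Set.Icc 0 1)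
    (L : ℕ) {a : ℝ} (ha : 4 * ∑ v, p v * F v ≤ a) :
    ∑ c : Fin L → V with L * a < ∑ j, F (c j), iidLaw p c ≤ exp (-(L * a / 2)) := by
  have markov : ∀ c : Fin L → V, (if L * a < ∑ j, F (c j) then iidLaw p c else 0)
      ≤ exp (-(L * a)) * (iidLaw p c * ∏ j, exp (F (c j))) := by
    intro c
    have hc := (isPMF_iidLaw hp).1 c
    split_ifs with h
    · rw [← exp_sum, mul_left_comm, ← exp_add]
      exact le_mul_of_one_le_right hc (one_le_exp (by linarith))
    · positivity
  calc ∑ c : Fin L → V with L * a < ∑ j, F (c j), iidLaw p c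
      ≤ exp (-(L * a)) * (∑ v, p v * exp (F v)) ^ L := by
        rw [sum_filter, ← Fin.prod_const, ← sum_iidLaw_mul_prod, mul_sum]
        exact sum_le_sum fun c _ => markov c
    _ ≤ exp (-(L * a)) * exp (2 * ∑ v, p v * F v) ^ L := by
        gcongr
        · exact sum_nonneg fun v _ => mul_nonneg (hp.1 v) (exp_pos _).le
        · exact sum_mul_exp_le_exp hp hF
    _ ≤ exp (-(L * a / 2)) := by
        rw [← exp_nat_mul, ← exp_add, exp_le_exp]
        nlinarith [(Nat.cast_nonneg L : (0 : ℝ) ≤ L)]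

end chernoff

lemma exists_forall_not_of_card_mul_lt {Ω ι : Type*} [Fintype Ω] [Fintype ι] {μ : Ω → ℝ}
    (hμ : IsPMF μ) (E : ι → Ω → Prop) [∀ i, DecidablePred (E i)] {ε : ℝ}
    (hE : ∀ i, ∑ ω with E i ω, μ ω ≤ ε)
    (hε : Fintype.card ι * ε < 1) : ∃ ω, ∀ i, ¬ E i ω := by
  by_contra! hcover
  have hone : ∀ ω, μ ω ≤ ∑ i, if E i ω then μ ω else 0 := fun ω => by
    obtain ⟨i, hi⟩ := hcover ω
    calc μ ω = if E i ω then μ ω else 0 := (if_pos hi).symm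
      _ ≤ _ := single_le_sum (f := fun i => if E i ω then μ ω else 0)
          (fun i _ => by split_ifs <;> simp [hμ.1]) (mem_univ i)
  have := calc (1 : ℝ) = ∑ ω, μ ω := hμ.2.symm
    _ ≤ ∑ ω, ∑ i, if E i ω then μ ω else 0 := sum_le_sum fun ω _ => hone ω
    _ = ∑ i, ∑ ω with E i ω, μ ω := by rw [sum_comm]; simp only [sum_filter]
    _ ≤ ∑ _i : ι, ε := sum_le_sum fun i _ => hE i
    _ = Fintype.card ι * ε := by simp
  linarith

lemma exists_codebook {V : Type*} [Fintype V] {p : V → ℝ} (hp : IsPMF p) {L M : ℕ} {a : ℝ}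
    {F₁ : V → ℝ} {F₂ : (Fin L → V) → V → ℝ}
    (hF₁ : ∀ v, F₁ v ∈ Set.Icc 0 1) (hF₂ : ∀ r v, F₂ r v ∈ Set.Icc 0 1)
    (hmean₁ : 4 * ∑ v, p v * F₁ v ≤ a) (hmean₂ : ∀ r, 4 * ∑ v, p v * F₂ r v ≤ a)
    (hM : (M : ℝ) ^ 2 * exp (-(L * a / 2)) < 1) :
    ∃ ω : Fin M → Fin L → V, (∀ m, ∑ j, F₁ (ω m j) ≤ L * a) ∧
      ∀ m m', m ≠ m' → ∑ j, F₂ (ω m') (ω m j) ≤ L * a := by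
  -- the diagonal pairs `(m, m)` index the missed-identification events: `M ^ 2` events in all
  let bad : Fin M × Fin M → (Fin M → Fin L → V) → Prop := fun mm ω =>
    if mm.1 = mm.2 then L * a < ∑ j, F₁ (ω mm.1 j)
    else L * a < ∑ j, F₂ (ω mm.2) (ω mm.1 j)
  have hbad : ∀ mm, ∑ ω with bad mm ω, iidLaw (iidLaw p) ω ≤ exp (-(L * a / 2)) := by
    rintro ⟨m, m'⟩
    simp only [sum_filter, bad]
    split_ifs with hmm
    · have hmarg := sum_iidLaw_mul_apply (isPMF_iidLaw (ι := Fin L) hp) m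
        (fun r => if L * a < ∑ j, F₁ (r j) then 1 else 0)
      simp only [mul_boole] at hmarg
      rw [hmarg]
      simpa only [sum_filter] using sum_iidLaw_lt_sum_le_exp hp hF₁ L hmean₁
    · have hmarg := sum_iidLaw_mul_apply_apply (isPMF_iidLaw (ι := Fin L) hp) (Ne.symm hmm)
        (fun r' r => if L * a < ∑ j, F₂ r' (r j) then 1 else 0)
      simp only [mul_boole] at hmarg
      rw [hmarg]
      calc _ ≤ ∑ r', iidLaw p r' * exp (-(L * a / 2)) := by
            refine sum_le_sum fun r' _ => mul_le_mul_of_nonneg_left ?_ ((isPMF_iidLaw hp).1 r')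
            simpa only [mul_boole, sum_filter] using
              sum_iidLaw_lt_sum_le_exp hp (hF₂ r') L (hmean₂ r')
        _ = exp (-(L * a / 2)) := by rw [← sum_mul, (isPMF_iidLaw hp).2, one_mul]
  obtain ⟨ω, hω⟩ := exists_forall_not_of_card_mul_lt (isPMF_iidLaw (isPMF_iidLaw hp)) bad hbad
    (by simpa [sq] using hM)
  refine ⟨ω, fun m => not_lt.1 ?_, fun m m' hmm => not_lt.1 ?_⟩
  · simpa [bad] using hω (m, m)
  · simpa [bad, hmm] using hω (m, m')

lemma sum_sup_le_sum_sum {α ι : Type*} [DecidableEq α] {g : α → ℝ} (hg : ∀ y, 0 ≤ g y)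
    (t : Finset ι) (s : ι → Finset α) :
    ∑ y ∈ t.sup s, g y ≤ ∑ i ∈ t, ∑ y ∈ s i, g y :=
  t.apply_sup_le_sum (f := fun u => ∑ y ∈ u, g y) sum_empty fun {u v} => by
    rw [← sum_union_inter (s₁ := u)]
    exact le_add_of_nonneg_right (sum_nonneg fun y _ => hg y)

section channel

variable {X Y : Type*} {P : X → ℝ} {W : X → Y → ℝ} {n : ℕ}

def outputDist [Fintype X] (P : X → ℝ) (W : X → Y → ℝ) (y : Y) : ℝ := ∑ x, P x * W x y

def typicalSet [Fintype X] [Fintype Y] (P : X → ℝ) (W : X → Y → ℝ) (c : ℝ)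
    (x : Fin n → X) : Finset (Fin n → Y) :=
  {y | c * iidLaw (outputDist P W) y < Wn W n x y}

def poolDecodingSet [Fintype X] [Fintype Y] (P : X → ℝ) (W : X → Y → ℝ) (c : ℝ)
    {L : ℕ} (r : Fin L → Fin n → X) : Finset (Fin n → Y) :=
  univ.sup fun j => typicalSet P W c (r j)

lemma outputDist_nonneg [Fintype X] [Fintype Y] (hP : IsPMF P) (hW : IsChannel W) (y : Y) :
    0 ≤ outputDist P W y :=
  sum_nonneg fun x _ => mul_nonneg (hP.1 x) (hW.1 x y)

lemma Wn_nonneg [Fintype Y] (hW : IsChannel W) (x : Fin n → X) (y : Fin n → Y) :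
    0 ≤ Wn W n x y :=
  prod_nonneg fun _ _ => hW.1 _ _

lemma sum_Wn_mem_Icc [Fintype Y] (hW : IsChannel W) (x : Fin n → X) (s : Finset (Fin n → Y)) :
    ∑ y ∈ s, Wn W n x y ∈ Set.Icc 0 1 := by
  refine ⟨sum_nonneg fun y _ => Wn_nonneg hW x y, ?_⟩
  calc ∑ y ∈ s, Wn W n x y ≤ ∑ y, Wn W n x y :=
        sum_le_sum_of_subset_of_nonneg (subset_univ s) fun y _ _ => Wn_nonneg hW x y
    _ = 1 := by simp [Wn, ← Fintype.prod_sum, hW.2]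

lemma sum_iidLaw_mul_Wn [Fintype X] (y : Fin n → Y) :
    ∑ x, iidLaw P x * Wn W n x y = iidLaw (outputDist P W) y :=
  sum_iidLaw_mul_prod fun i a => W a (y i)

lemma sum_typicalSet_iidLaw_le [Fintype X] [Fintype Y] (hW : IsChannel W) {c : ℝ} (hc : 0 < c)
    (x : Fin n → X) :
    ∑ y ∈ typicalSet P W c x, iidLaw (outputDist P W) y ≤ c⁻¹ := by
  calc ∑ y ∈ typicalSet P W c x, iidLaw (outputDist P W) y
      ≤ ∑ y ∈ typicalSet P W c x, c⁻¹ * Wn W n x y := by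
        refine sum_le_sum fun y hy => ?_
        rw [le_inv_mul_iff₀ hc]
        exact (mem_filter.1 hy).2.le
    _ = c⁻¹ * ∑ y ∈ typicalSet P W c x, Wn W n x y := (mul_sum ..).symm
    _ ≤ c⁻¹ * 1 := by gcongr; exact (sum_Wn_mem_Icc hW x _).2
    _ = c⁻¹ := mul_one _

lemma sum_iidLaw_mul_sum_poolDecodingSet_le [Fintype X] [Fintype Y] (hP : IsPMF P)
    (hW : IsChannel W) {c : ℝ} (hc : 0 < c) {L : ℕ} (r : Fin L → Fin n → X) :
    ∑ x, iidLaw P x * ∑ y ∈ poolDecodingSet P W c r, Wn W n x y ≤ L / c := by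
  simp only [mul_sum]
  rw [sum_comm]
  simp only [sum_iidLaw_mul_Wn]
  calc _ ≤ ∑ j, ∑ y ∈ typicalSet P W c (r j), iidLaw (outputDist P W) y :=
        sum_sup_le_sum_sum (fun y => prod_nonneg fun i _ => outputDist_nonneg hP hW _) _ _
    _ ≤ ∑ _j : Fin L, c⁻¹ := sum_le_sum fun j _ => sum_typicalSet_iidLaw_le hW hc (r j)
    _ = L / c := by simp [div_eq_mul_inv]

end channel

lemma exists_lt_of_hasDerivAt_neg {f : ℝ → ℝ} {d x : ℝ} (hf : HasDerivAt f d x)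
    (hd : d < 0) :
    ∃ t, x < t ∧ f t < f x := by
  obtain ⟨t, hslope, hxt⟩ := ((hf.hasDerivWithinAt.liminf_right_slope_le hd).and_eventually
    self_mem_nhdsWithin).exists
  refine ⟨t, hxt, ?_⟩
  rw [slope_def_field, div_neg_iff] at hslope
  rcases hslope with ⟨-, h⟩ | ⟨h, -⟩
  · exact absurd h (not_lt.2 (sub_nonneg.2 (le_of_lt hxt)))
  · linarith

lemma sum_sum_prod_eq_pow {A B : Type*} [Fintype A] [Fintype B] (n : ℕ) (h : A → B → ℝ) :
    ∑ x : Fin n → A, ∑ y : Fin n → B, ∏ i, h (x i) (y i) = (∑ a, ∑ b, h a b) ^ n := by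
  simp only [← Fintype.prod_sum]
  rw [← Fintype.prod_sum (fun (_ : Fin n) a => ∑ b, h a b), prod_const, card_univ,
    Fintype.card_fin]

section infoDensity

variable {X Y : Type*} [Fintype X] [Fintype Y] {P : X → ℝ} {W : X → Y → ℝ}

/-- `∑ a, ∑ b, tiltedWeight P W γ t a b` is the moment generating function, at `t`, of
`γ - log (W(b|a) / (PW)(b))` under the joint law `P(a) W(b|a)`. -/
def tiltedWeight (P : X → ℝ) (W : X → Y → ℝ) (γ t : ℝ) (a : X) (b : Y) : ℝ :=
  if P a * W a b = 0 then 0 else P a * W a b * exp (t * (γ - log (W a b / outputDist P W b)))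

lemma tiltedWeight_nonneg (hP : IsPMF P) (hW : IsChannel W) (γ t : ℝ) (a : X) (b : Y) :
    0 ≤ tiltedWeight P W γ t a b := by
  unfold tiltedWeight
  split_ifs
  · exact le_rfl
  · exact mul_nonneg (mul_nonneg (hP.1 a) (hW.1 a b)) (exp_pos _).le

lemma sum_sum_mul_eq_one (hP : IsPMF P) (hW : IsChannel W) : ∑ a, ∑ b, P a * W a b = 1 := by
  simp [← mul_sum, hW.2, hP.2]

lemma sum_tiltedWeight_zero (hP : IsPMF P) (hW : IsChannel W) (γ : ℝ) :
    ∑ a, ∑ b, tiltedWeight P W γ 0 a b = 1 := by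
  rw [← sum_sum_mul_eq_one hP hW]
  refine sum_congr rfl fun a _ => sum_congr rfl fun b _ => ?_
  unfold tiltedWeight
  split_ifs with h
  · exact h.symm
  · simp

lemma hasDerivAt_sum_tiltedWeight (hP : IsPMF P) (hW : IsChannel W) (γ : ℝ) :
    HasDerivAt (fun t => ∑ a, ∑ b, tiltedWeight P W γ t a b) (γ - mutInf P W) 0 := by
  have hterm : ∀ a b, HasDerivAt (fun t => tiltedWeight P W γ t a b)
      (γ * (P a * W a b) - if P a * W a b = 0 then 0
        else P a * W a b * log (W a b / outputDist P W b)) 0 := fun a b => by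
    unfold tiltedWeight
    split_ifs with h
    · simpa [h] using hasDerivAt_const (0 : ℝ) (0 : ℝ)
    · refine (((hasDerivAt_id (0 : ℝ)).mul_const
        (γ - log (W a b / outputDist P W b))).exp.const_mul (P a * W a b)).congr_deriv ?_
      simp only [id, zero_mul, exp_zero, one_mul]
      ring
  refine (HasDerivAt.fun_sum fun a _ => HasDerivAt.fun_sum fun b _ => hterm a b).congr_deriv ?_
  simp only [sum_sub_distrib, ← mul_sum, hW.2, mul_one, hP.2]
  rfl

/-- Exponential Markov bound: off the typical set the information density
`∑ i, log (W / PW)` is at most `n γ`, so `exp (t * (n γ - density)) ≥ 1`. -/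
lemma iidLaw_mul_Wn_le_prod_tiltedWeight (hP : IsPMF P) (hW : IsChannel W) {γ t : ℝ}
    (ht : 0 ≤ t) {n : ℕ} {x : Fin n → X} {y : Fin n → Y}
    (hxy : Wn W n x y ≤ exp (n * γ) * iidLaw (outputDist P W) y) :
    iidLaw P x * Wn W n x y ≤ ∏ i, tiltedWeight P W γ t (x i) (y i) := by
  have hjoint : iidLaw P x * Wn W n x y = ∏ i, P (x i) * W (x i) (y i) :=
    (prod_mul_distrib ..).symm
  by_cases hzero : ∃ i, P (x i) * W (x i) (y i) = 0
  · rw [hjoint, prod_eq_zero_iff.2 (by simpa using hzero)]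
    exact prod_nonneg fun i _ => tiltedWeight_nonneg hP hW γ t _ _
  push Not at hzero
  have hPW : ∀ i, 0 < P (x i) * W (x i) (y i) := fun i =>
    (mul_nonneg (hP.1 _) (hW.1 _ _)).lt_of_ne' (hzero i)
  have hW_pos : ∀ i, 0 < W (x i) (y i) := fun i => pos_of_mul_pos_right (hPW i) (hP.1 _)
  have hout_pos : ∀ i, 0 < outputDist P W (y i) := fun i => (hPW i).trans_le
    (single_le_sum (f := fun a => P a * W a (y i)) (fun a _ => mul_nonneg (hP.1 a) (hW.1 a _))
      (mem_univ (x i)))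
  have hdensity : ∑ i, log (W (x i) (y i) / outputDist P W (y i)) ≤ n * γ := by
    rw [← log_prod fun i _ => (div_pos (hW_pos i) (hout_pos i)).ne', prod_div_distrib,
      log_le_iff_le_exp (div_pos (prod_pos fun i _ => hW_pos i)
        (prod_pos fun i _ => hout_pos i)), div_le_iff₀ (prod_pos fun i _ => hout_pos i)]
    exact hxy
  calc iidLaw P x * Wn W n x y
      ≤ iidLaw P x * Wn W n x y *
          exp (t * ∑ i, (γ - log (W (x i) (y i) / outputDist P W (y i)))) := by
        refine le_mul_of_one_le_right (by rw [hjoint]; exact prod_nonneg fun i _ => (hPW i).le)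
          (one_le_exp (mul_nonneg ht ?_))
        simp only [sum_sub_distrib, sum_const, card_univ, Fintype.card_fin, nsmul_eq_mul]
        linarith
    _ = ∏ i, tiltedWeight P W γ t (x i) (y i) := by
        simp only [hjoint, mul_sum, exp_sum, ← prod_mul_distrib, tiltedWeight, hzero, if_false]

lemma exists_sum_iidLaw_mul_sum_compl_typicalSet_le (hP : IsPMF P) (hW : IsChannel W) {γ : ℝ}
    (hγ : γ < mutInf P W) : ∃ δ > 0, ∀ n : ℕ,
      ∑ x : Fin n → X, iidLaw P x * ∑ y ∈ (typicalSet P W (exp (n * γ)) x)ᶜ, Wn W n x y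
        ≤ exp (-(n * δ)) := by
  -- the moment generating function equals `1` at `0` and has slope `γ - I(P,W) < 0` there
  obtain ⟨t, ht, hlt⟩ := exists_lt_of_hasDerivAt_neg (hasDerivAt_sum_tiltedWeight hP hW γ)
    (sub_neg.2 hγ)
  set q := ∑ a, ∑ b, tiltedWeight P W γ t a b
  rw [sum_tiltedWeight_zero hP hW] at hlt
  have hq : 0 ≤ q :=
    sum_nonneg fun a _ => sum_nonneg fun b _ => tiltedWeight_nonneg hP hW γ t a b
  refine ⟨-log ((q + 1) / 2), neg_pos.2 (log_neg (by positivity) (by linarith)), fun n => ?_⟩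
  calc ∑ x : Fin n → X, iidLaw P x * ∑ y ∈ (typicalSet P W (exp (n * γ)) x)ᶜ, Wn W n x y
      ≤ ∑ x : Fin n → X, ∑ y : Fin n → Y, ∏ i, tiltedWeight P W γ t (x i) (y i) := by
        refine sum_le_sum fun x _ => ?_
        rw [mul_sum]
        refine (sum_le_sum fun y hy => iidLaw_mul_Wn_le_prod_tiltedWeight hP hW ht.le ?_).trans
          (sum_le_sum_of_subset_of_nonneg (subset_univ _) fun y _ _ =>
            prod_nonneg fun i _ => tiltedWeight_nonneg hP hW γ t _ _)
        simpa [typicalSet] using hy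
    _ = q ^ n := sum_sum_prod_eq_pow n _
    _ ≤ ((q + 1) / 2) ^ n := by gcongr; linarith
    _ = exp (-(n * -log ((q + 1) / 2))) := by
        rw [mul_neg, neg_neg, exp_nat_mul, exp_log (by positivity)]

end infoDensity

section code

variable {V : Type*} [Fintype V] {L : ℕ}

def poolDistribution (r : Fin L → V) (v : V) : ℝ := (∑ j, if r j = v then 1 else 0) / L

lemma sum_poolDistribution_mul (r : Fin L → V) (g : V → ℝ) :
    ∑ v, poolDistribution r v * g v = (∑ j, g (r j)) / L := by
  simp only [poolDistribution, div_mul_eq_mul_div, ← sum_div, sum_mul, boole_mul]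
  rw [sum_comm]
  simp

lemma isPMF_poolDistribution (hL : 0 < L) (r : Fin L → V) : IsPMF (poolDistribution r) := by
  refine ⟨fun v => div_nonneg (sum_nonneg fun j _ => by positivity) L.cast_nonneg, ?_⟩
  simpa [hL.ne'] using sum_poolDistribution_mul r fun _ => 1

end code

section idCode

variable {X Y : Type*} [Fintype X] [Fintype Y] {P : X → ℝ} {W : X → Y → ℝ}

theorem exists_isIDCode (hP : IsPMF P) (hW : IsChannel W) {n L M : ℕ} (hL : 0 < L) {c a : ℝ}
    (hc : 0 < c)
    (hmiss : 4 * ∑ x, iidLaw P x * ∑ y ∈ (typicalSet P W c x)ᶜ, Wn W n x y ≤ a)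
    (hwrong : 4 * (L / c) ≤ a) (hM : (M : ℝ) ^ 2 * exp (-(L * a / 2)) < 1) :
    ∃ (Q : Fin M → (Fin n → X) → ℝ) (D : Fin M → Finset (Fin n → Y)),
      IsIDCode n W Q D a a := by
  obtain ⟨ω, hω₁, hω₂⟩ := exists_codebook (isPMF_iidLaw hP)
    (F₁ := fun x => ∑ y ∈ (typicalSet P W c x)ᶜ, Wn W n x y)
    (F₂ := fun r x => ∑ y ∈ poolDecodingSet P W c r, Wn W n x y)
    (fun x => sum_Wn_mem_Icc hW x _) (fun r x => sum_Wn_mem_Icc hW x _) hmiss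
    (fun r => (mul_le_mul_of_nonneg_left
      (sum_iidLaw_mul_sum_poolDecodingSet_le hP hW hc r) (by norm_num)).trans hwrong) hM
  have hL' : (0 : ℝ) < L := Nat.cast_pos.2 hL
  refine ⟨fun m => poolDistribution (ω m), fun m => poolDecodingSet P W c (ω m),
    fun m => isPMF_poolDistribution hL (ω m), fun m => ?_, fun m m' hmm => ?_⟩
  · rw [sum_poolDistribution_mul, div_le_iff₀' hL']
    refine (sum_le_sum fun j _ => ?_).trans (hω₁ m)
    refine sum_le_sum_of_subset_of_nonneg (compl_subset_compl.2 ?_) fun y _ _ => Wn_nonneg hW _ y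
    exact le_sup (f := fun j => typicalSet P W c (ω m j)) (mem_univ j)
  · rw [sum_poolDistribution_mul, div_le_iff₀' hL']
    exact hω₂ m m' hmm

theorem exists_isIDCode_of_le (hP : IsPMF P) (hW : IsChannel W) {n : ℕ} {E K c : ℝ}
    (hE : 1 ≤ E) (hK : 16 ≤ K) (hc : E * K ^ 4 ≤ c)
    (hmiss : ∑ x, iidLaw P x * ∑ y ∈ (typicalSet P W c x)ᶜ, Wn W n x y ≤ (K ^ 2)⁻¹) :
    ∃ (k : ℕ) (Q : Fin k → (Fin n → X) → ℝ) (D : Fin k → Finset (Fin n → Y)),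
      IsIDCode n W Q D K⁻¹ K⁻¹ ∧ exp E ≤ k := by
  set L := ⌈E * K ^ 2⌉₊
  set M := ⌈exp E⌉₊
  have hK0 : 0 < K := by linarith
  have hc0 : 0 < c := lt_of_lt_of_le (by positivity) hc
  have hL : E * K ^ 2 ≤ L ∧ (L : ℝ) ≤ 2 * E * K ^ 2 :=
    ⟨Nat.le_ceil _, by nlinarith [Nat.ceil_lt_add_one (by positivity : 0 ≤ E * K ^ 2)]⟩
  have hM : (M : ℝ) ≤ exp (E + 1) := by
    rw [exp_add]
    nlinarith [Nat.ceil_lt_add_one (exp_pos E).le, add_one_le_exp (1 : ℝ),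
      one_le_exp (by linarith : 0 ≤ E)]
  have hmissK :
      4 * ∑ x, iidLaw P x * ∑ y ∈ (typicalSet P W c x)ᶜ, Wn W n x y ≤ K⁻¹ := by
    refine (mul_le_mul_of_nonneg_left hmiss (by norm_num)).trans ?_
    field_simp
    nlinarith
  have hwrongK : 4 * (L / c) ≤ K⁻¹ := by
    rw [mul_div_assoc', div_le_iff₀ hc0]
    field_simp
    nlinarith [mul_le_mul_of_nonneg_left hL.2 (by positivity : (0 : ℝ) ≤ 4 * K),
      mul_nonneg (by positivity : (0 : ℝ) ≤ E * K ^ 3) (by linarith : (0 : ℝ) ≤ K - 8)]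
  have hsmall : (M : ℝ) ^ 2 * exp (-(L * K⁻¹ / 2)) < 1 := by
    have hLK : 8 * E ≤ L * K⁻¹ / 2 := by
      rw [le_div_iff₀ two_pos, ← div_eq_mul_inv, le_div_iff₀ hK0]
      nlinarith [hL.1]
    calc (M : ℝ) ^ 2 * exp (-(L * K⁻¹ / 2)) ≤ exp (E + 1) ^ 2 * exp (-(8 * E)) := by gcongr
      _ = exp (2 - 6 * E) := by rw [sq, ← exp_add, ← exp_add]; ring_nf
      _ < 1 := exp_lt_one_iff.2 (by linarith)
  obtain ⟨Q, D, hcode⟩ := exists_isIDCode hP hW (Nat.ceil_pos.2 (by positivity)) hc0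
    hmissK hwrongK hsmall
  exact ⟨M, Q, D, hcode, Nat.le_ceil _⟩

end idCode

lemma le_one_div_mul_log_log {n k : ℕ} {R : ℝ} (hn : 0 < n) (hk : exp (exp (n * R)) ≤ k) :
    R ≤ 1 / n * log (log k) := by
  have hlog : exp (n * R) ≤ log k := by
    simpa using log_le_log (exp_pos _) hk
  have hloglog : n * R ≤ log (log k) := by
    simpa using log_le_log (exp_pos _) hlog
  rw [one_div, le_inv_mul_iff₀ (Nat.cast_pos.2 hn)]
  exact hloglog

theorem dmc_id_achievability_general
    {X Y : Type} [Fintype X] [Fintype Y]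
    (W : X → Y → ℝ) (hW : IsChannel W)
    (P : X → ℝ) (hP : IsPMF P)
    (R : ℝ) (hR0 : 0 < R) (hRI : R < mutInf P W) :
    ∃ τ : ℝ, 0 < τ ∧ ∃ n₀ : ℕ, ∀ n : ℕ, n₀ ≤ n →
      ∃ (k : ℕ) (Q : Fin k → (Fin n → X) → ℝ) (D : Fin k → Finset (Fin n → Y)),
        IsIDCode n W Q D (Real.exp (-(n * τ))) (Real.exp (-(n * τ))) ∧
        R ≤ (1 / n) * Real.log (Real.log k) := by
  obtain ⟨γ, hRγ, hγI⟩ := exists_between hRI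
  obtain ⟨δ, hδ, hmiss⟩ := exists_sum_iidLaw_mul_sum_compl_typicalSet_le hP hW hγI
  set τ := min (δ / 2) ((γ - R) / 4)
  have hτ : 0 < τ := lt_min (by positivity) (by linarith)
  obtain ⟨n₀, hn₀⟩ := Filter.eventually_atTop.1 ((tendsto_exp_atTop.comp
    (tendsto_natCast_atTop_atTop.atTop_mul_const hτ)).eventually_ge_atTop 16)
  refine ⟨τ, hτ, n₀, fun n hn => ?_⟩
  have hK : 16 ≤ exp (n * τ) := hn₀ n hn
  have hn : 0 < n := Nat.pos_of_ne_zero fun h => by norm_num [h] at hK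
  have hc : exp (n * R) * exp (n * τ) ^ 4 ≤ exp (n * γ) := by
    rw [← exp_nat_mul, ← exp_add, exp_le_exp]
    push_cast
    linarith [mul_le_mul_of_nonneg_left (min_le_right (δ / 2) ((γ - R) / 4)) n.cast_nonneg]
  have hmiss' : _ ≤ (exp (n * τ) ^ 2)⁻¹ := (hmiss n).trans <| by
    rw [← exp_nat_mul, ← exp_neg, exp_le_exp]
    push_cast
    linarith [mul_le_mul_of_nonneg_left (min_le_left (δ / 2) ((γ - R) / 4)) n.cast_nonneg]
  obtain ⟨k, Q, D, hcode, hk⟩ :=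
    exists_isIDCode_of_le hP hW (one_le_exp (by positivity)) hK hc hmiss'
  rw [← exp_neg] at hcode
  exact ⟨k, Q, D, hcode, le_one_div_mul_log_log hn hk⟩

/-- For every DMC `W`, input PMF `P`, and rate `0 < R < I(P,W)`,
there are `τ > 0` and `n₀` such that for every blocklength `n ≥ n₀` there is an
`(n, ℳ, e^{-nτ}, e^{-nτ})` ID code for `W` with `(1/n) log log |ℳ| ≥ R`. -/
theorem dmc_id_achievability
    {X Y : Type} [Fintype X] [Fintype Y] [Nonempty X] [Nonempty Y]
    (W : X → Y → ℝ) (hW : IsChannel W)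
    (P : X → ℝ) (hP : IsPMF P)
    (R : ℝ) (hR0 : 0 < R) (hRI : R < mutInf P W) :
    ∃ τ : ℝ, 0 < τ ∧ ∃ n₀ : ℕ, ∀ n : ℕ, n₀ ≤ n →
      ∃ (k : ℕ) (Q : Fin k → (Fin n → X) → ℝ) (D : Fin k → Finset (Fin n → Y)),
        IsIDCode n W Q D (Real.exp (-(n * τ))) (Real.exp (-(n * τ))) ∧
        R ≤ (1 / n) * Real.log (Real.log k) :=
  dmc_id_achievability_general W hW P hP R hR0 hRI
end
end

section
/- (Lemma 1 of the paper.) With the random index sets {V_m}_{m∈ℳ} and the event G_μ defined in the context, the probability that {V_m}_{m∈ℳ} is not in G_μ converges to zero as the blocklength n tends to infinity: lim_{n→∞} Pr({V_m}_{m∈ℳ} ∉ G_μ) = 0. -/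
open scoped Classical
open Finset

noncomputable section

/-- Number of ID messages: `⌈exp(exp(nR))⌉`. -/
def Kmsg (R : ℝ) (n : ℕ) : ℕ := Nat.ceil (Real.exp (Real.exp (n * R)))

/-- Size of the pool index set: `⌈e^{n R_pool}⌉`. -/
def Kpool (Rpool : ℝ) (n : ℕ) : ℕ := Nat.ceil (Real.exp (n * Rpool))

/-- Probability, under independent Bernoulli(p) selection of each pair `(a,b)`,
of the outcome `ω : A → B → Bool`. -/
def bernWeight {A B : Type*} [Fintype A] [Fintype B] (p : ℝ) (ω : A → B → Bool) : ℝ :=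
  ∏ a, ∏ b, if ω a b then p else 1 - p

/-- The (random) index set `V_a ⊆ B` determined by the outcome `ω`. -/
def idxSet {A B : Type*} [Fintype B] (ω : A → B → Bool) (a : A) : Finset B :=
  Finset.univ.filter (fun b => ω a b = true)

/-- The event `G_μ`: for every pair of distinct messages `m ≠ m'`, with
`δₙ = e^{-nμ/2}`, one has `|V_m| > (1-δₙ)e^{nR̃}`, `|V_{m'}| < (1+δₙ)e^{nR̃}`,
and `|V_m ∩ V_{m'}| < 2 e^{n(R̃-μ/2)}`. -/
def GoodEventG {A B : Type*} [Fintype B] (Rt μ : ℝ) (n : ℕ) (ω : A → B → Bool) : Prop :=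
  ∀ m m' : A, m ≠ m' →
    ((1 - Real.exp (-(n * μ / 2))) * Real.exp (n * Rt) < ((idxSet ω m).card : ℝ)) ∧
    (((idxSet ω m').card : ℝ) < (1 + Real.exp (-(n * μ / 2))) * Real.exp (n * Rt)) ∧
    (((idxSet ω m ∩ idxSet ω m').card : ℝ) < 2 * Real.exp (n * (Rt - μ / 2)))

/-! The columns `(𝟙[v ∈ V_m])_{m ∈ ℳ}`, `v ∈ 𝒱`, of the random incidence array are i.i.d., so
each of the three conditions of `G_μ` for a fixed pair `m ≠ m'` fails only on a Chernoff tail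
of a sum of `|𝒱|` i.i.d. indicators. With `Q = e^{n(R̃ - μ)}` each tail has probability at
most `e^{2 - Q/4}`, and a union bound over the `|ℳ|² ≤ 4 exp(2e^{nR})` pairs leaves
`12 exp(2e^{nR} + 2 - Q/4)`, which tends to zero because `R̃ - μ > R`. -/

open Real Filter Topology

section Marginal

variable {A C R : Type*} [Fintype A] [DecidableEq A] [Fintype C] [CommSemiring R]

theorem sum_prod_mul_eq_sum_mul_sum_subtype_ne (q : C → R) (m : A)
    (G : C → ({a // a ≠ m} → C) → R) :
    ∑ x : A → C, (∏ a, q (x a)) * G (x m) (fun j => x j) =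
      ∑ c, q c * ∑ y : {a // a ≠ m} → C, (∏ j, q (y j)) * G c y := by
  rw [Fintype.sum_equiv (Equiv.funSplitAt m C) _ (fun z => q z.1 * ((∏ j, q (z.2 j)) * G z.1 z.2))
    fun x => by rw [Fintype.prod_eq_mul_prod_subtype_ne _ m, mul_assoc]; rfl,
    Fintype.sum_prod_type]
  simp only [mul_sum]

theorem sum_prod_mul_apply {q : C → R} (hq : ∑ c, q c = 1) (m : A) (φ : C → R) :
    ∑ x : A → C, (∏ a, q (x a)) * φ (x m) = ∑ c, q c * φ c := by
  refine (sum_prod_mul_eq_sum_mul_sum_subtype_ne q m fun c _ => φ c).trans ?_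
  simp only [← sum_mul, ← Fintype.prod_sum, hq, prod_const_one, one_mul]

theorem sum_prod_mul_apply_apply {q : C → R} (hq : ∑ c, q c = 1) {m m' : A} (hm : m ≠ m')
    (F : C → C → R) :
    ∑ x : A → C, (∏ a, q (x a)) * F (x m) (x m') = ∑ c, ∑ c', q c * q c' * F c c' := by
  refine (sum_prod_mul_eq_sum_mul_sum_subtype_ne q m fun c y => F c (y ⟨m', hm.symm⟩)).trans ?_
  simp only [sum_prod_mul_apply hq, mul_sum, mul_assoc]

end Marginal

-- `bernWeight p ω` unfolds to `∏ a, ∏ b, coinWeight p (ω a b)`.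
def coinWeight (p : ℝ) (t : Bool) : ℝ := if t then p else 1 - p

theorem sum_coinWeight (p : ℝ) : ∑ t, coinWeight p t = 1 := by
  simp [coinWeight]

theorem coinWeight_nonneg {p : ℝ} (hp0 : 0 ≤ p) (hp1 : p ≤ 1) (t : Bool) :
    0 ≤ coinWeight p t := by
  cases t <;> simp [coinWeight, hp0, hp1]

section Mgf

variable {A : Type*} [Fintype A] [DecidableEq A]

theorem sum_prod_coinWeight_mul_exp_indicator (p s : ℝ) (m : A) :
    ∑ x : A → Bool, (∏ a, coinWeight p (x a)) * exp (s * if x m then 1 else 0) =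
      p * (exp s - 1) + 1 := by
  refine (sum_prod_mul_apply (sum_coinWeight p) m fun t => exp (s * if t then 1 else 0)).trans ?_
  simp only [Fintype.sum_bool, coinWeight, ↓reduceIte, Bool.false_eq_true, mul_one, mul_zero,
    exp_zero]
  ring

theorem sum_prod_coinWeight_mul_exp_indicator_and (p : ℝ) {m m' : A} (hm : m ≠ m') :
    ∑ x : A → Bool, (∏ a, coinWeight p (x a)) * exp (if x m ∧ x m' then 1 else 0) =
      p ^ 2 * (exp 1 - 1) + 1 := by
  refine (sum_prod_mul_apply_apply (sum_coinWeight p) hm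
    fun t t' => exp (if t ∧ t' then 1 else 0)).trans ?_
  simp only [Fintype.sum_bool, coinWeight, ↓reduceIte, Bool.false_eq_true, and_true, and_false,
    exp_zero, mul_one]
  ring

end Mgf

section Chernoff

variable {A B : Type*} [Fintype A] [Fintype B]

theorem bernWeight_nonneg {p : ℝ} (hp0 : 0 ≤ p) (hp1 : p ≤ 1) (ω : A → B → Bool) :
    0 ≤ bernWeight p ω :=
  prod_nonneg fun a _ => prod_nonneg fun b _ => coinWeight_nonneg hp0 hp1 (ω a b)

theorem sum_bernWeight_mul_prod (p : ℝ) (φ : (A → Bool) → ℝ) :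
    ∑ ω : A → B → Bool, bernWeight p ω * ∏ b, φ (fun a => ω a b) =
      (∑ x : A → Bool, (∏ a, coinWeight p (x a)) * φ x) ^ Fintype.card B := by
  rw [← card_univ, ← prod_const, Fintype.prod_sum]
  refine Fintype.sum_equiv (Equiv.piComm fun _ _ => Bool) _ _ fun ω => ?_
  rw [bernWeight, Finset.prod_comm, ← prod_mul_distrib]
  rfl

theorem sum_bernWeight_le_exp_of_mgf_le {p : ℝ} (hp0 : 0 ≤ p) (hp1 : p ≤ 1)
    (X : (A → Bool) → ℝ) {u a : ℝ}
    (hX : ∑ x : A → Bool, (∏ i, coinWeight p (x i)) * exp (X x) ≤ exp u)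
    {S : Finset (A → B → Bool)} (hS : ∀ ω ∈ S, a ≤ ∑ b, X (fun i => ω i b)) :
    ∑ ω ∈ S, bernWeight p ω ≤ exp (Fintype.card B * u - a) := by
  have hw := bernWeight_nonneg (A := A) (B := B) hp0 hp1
  have hmgf : 0 ≤ ∑ x : A → Bool, (∏ i, coinWeight p (x i)) * exp (X x) :=
    sum_nonneg fun x _ => mul_nonneg (prod_nonneg fun i _ => coinWeight_nonneg hp0 hp1 _)
      (exp_pos _).le
  calc ∑ ω ∈ S, bernWeight p ω
      ≤ ∑ ω ∈ S, bernWeight p ω * exp (∑ b, X (fun i => ω i b) - a) :=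
        sum_le_sum fun ω hω =>
          le_mul_of_one_le_right (hw ω) (one_le_exp (sub_nonneg.2 (hS ω hω)))
    _ ≤ ∑ ω, bernWeight p ω * exp (∑ b, X (fun i => ω i b) - a) :=
        sum_le_sum_of_subset_of_nonneg (subset_univ S) fun ω _ _ =>
          mul_nonneg (hw ω) (exp_pos _).le
    _ = exp (-a) * (∑ x : A → Bool, (∏ i, coinWeight p (x i)) * exp (X x)) ^ Fintype.card B := by
        rw [← sum_bernWeight_mul_prod, mul_sum]
        refine sum_congr rfl fun ω _ => ?_
        rw [sub_eq_add_neg, exp_add, exp_sum]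
        ring
    _ ≤ exp (-a) * exp u ^ Fintype.card B := by gcongr
    _ = exp (Fintype.card B * u - a) := by
        rw [← exp_nat_mul, ← exp_add]
        ring_nf

end Chernoff

theorem card_idxSet_eq_sum {A B : Type*} [Fintype B] (ω : A → B → Bool) (m : A) :
    (#(idxSet ω m) : ℝ) = ∑ b, if ω m b then 1 else 0 := by
  rw [idxSet, card_filter]
  push_cast
  rfl

theorem card_idxSet_inter_eq_sum {A B : Type*} [Fintype B] [DecidableEq B]
    (ω : A → B → Bool) (m m' : A) :
    (#(idxSet ω m ∩ idxSet ω m') : ℝ) = ∑ b, if ω m b ∧ ω m' b then 1 else 0 := by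
  rw [idxSet, idxSet, ← filter_and, card_filter]
  push_cast
  rfl

section Tails

variable {A B : Type*} [Fintype A] [Fintype B] {p : ℝ} {S : Finset (A → B → Bool)}

theorem sum_bernWeight_le_of_card_idxSet_le {δ E : ℝ} (hp0 : 0 ≤ p) (hp1 : p ≤ 1)
    (hδ0 : 0 ≤ δ) (hδ1 : δ ≤ 1) (hE0 : 0 ≤ E) (hE : E ≤ Fintype.card B * p) (m : A)
    (hS : ∀ ω ∈ S, (#(idxSet ω m) : ℝ) ≤ (1 - δ) * E) :
    ∑ ω ∈ S, bernWeight p ω ≤ exp (-(E * δ ^ 2 / 4)) := by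
  refine (sum_bernWeight_le_exp_of_mgf_le hp0 hp1 (fun x => -(δ / 2) * if x m then 1 else 0)
    (u := p * (exp (-(δ / 2)) - 1)) (a := -(δ / 2) * ((1 - δ) * E)) ?_ fun ω hω => ?_).trans
    (exp_le_exp.2 ?_)
  · exact (sum_prod_coinWeight_mul_exp_indicator p _ m).trans_le (add_one_le_exp _)
  · rw [← mul_sum, ← card_idxSet_eq_sum]
    exact mul_le_mul_of_nonpos_left (hS ω hω) (by linarith)
  · have hexp : exp (-(δ / 2)) - 1 ≤ -(δ / 2) + (δ / 2) ^ 2 := by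
      have := abs_exp_sub_one_sub_id_le (x := -(δ / 2)) (by rw [abs_le]; constructor <;> linarith)
      linarith [(abs_le.1 this).2]
    have hneg : exp (-(δ / 2)) - 1 ≤ 0 := by nlinarith
    nlinarith [mul_le_mul_of_nonpos_right hE hneg, mul_le_mul_of_nonneg_left hexp hE0]

theorem sum_bernWeight_le_of_le_card_idxSet {δ E : ℝ} (hp0 : 0 ≤ p) (hp1 : p ≤ 1)
    (hδ0 : 0 ≤ δ) (hδ1 : δ ≤ 1) (hE0 : 0 ≤ E) (hE : Fintype.card B * p ≤ E + 1) (m : A)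
    (hS : ∀ ω ∈ S, (1 + δ) * E ≤ #(idxSet ω m)) :
    ∑ ω ∈ S, bernWeight p ω ≤ exp (1 - E * δ ^ 2 / 4) := by
  refine (sum_bernWeight_le_exp_of_mgf_le hp0 hp1 (fun x => δ / 2 * if x m then 1 else 0)
    (u := p * (exp (δ / 2) - 1)) (a := δ / 2 * ((1 + δ) * E)) ?_ fun ω hω => ?_).trans
    (exp_le_exp.2 ?_)
  · exact (sum_prod_coinWeight_mul_exp_indicator p _ m).trans_le (add_one_le_exp _)
  · rw [← mul_sum, ← card_idxSet_eq_sum]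
    exact mul_le_mul_of_nonneg_left (hS ω hω) (by linarith)
  · have hexp : exp (δ / 2) - 1 ≤ δ / 2 + (δ / 2) ^ 2 := by
      have := abs_exp_sub_one_sub_id_le (x := δ / 2) (by rw [abs_le]; constructor <;> linarith)
      linarith [(abs_le.1 this).2]
    have hpos : 0 ≤ exp (δ / 2) - 1 := by linarith [add_one_le_exp (δ / 2)]
    nlinarith [mul_le_mul_of_nonneg_right hE hpos, mul_le_mul_of_nonneg_left hexp
      (by linarith : 0 ≤ E + 1)]

theorem sum_bernWeight_le_of_le_card_idxSet_inter [DecidableEq B] {c : ℝ} (hp0 : 0 ≤ p)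
    (hp1 : p ≤ 1) (hc : Fintype.card B * p ^ 2 ≤ c + 1) {m m' : A} (hm : m ≠ m')
    (hS : ∀ ω ∈ S, 2 * c ≤ #(idxSet ω m ∩ idxSet ω m')) :
    ∑ ω ∈ S, bernWeight p ω ≤ exp (2 - c / 4) := by
  refine (sum_bernWeight_le_exp_of_mgf_le hp0 hp1 (fun x => if x m ∧ x m' then 1 else 0)
    (u := p ^ 2 * (exp 1 - 1)) (a := 2 * c) ?_ fun ω hω => ?_).trans (exp_le_exp.2 ?_)
  · exact (sum_prod_coinWeight_mul_exp_indicator_and p hm).trans_le (add_one_le_exp _)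
  · rw [← card_idxSet_inter_eq_sum]
    exact hS ω hω
  · have he : exp 1 - 1 ≤ 7 / 4 := by linarith [exp_one_lt_d9]
    have hNp : 0 ≤ Fintype.card B * p ^ 2 := by positivity
    nlinarith [mul_le_mul_of_nonneg_left he hNp]

end Tails

section UnionBound

variable {α ι : Type*} [Fintype α] {f : α → ℝ}

theorem sum_filter_le_sum_sum_filter (s : Finset ι) {P : α → Prop} [DecidablePred P]
    {Q : ι → α → Prop} [∀ i, DecidablePred (Q i)] (hf : ∀ x, 0 ≤ f x)
    (hPQ : ∀ x, P x → ∃ i ∈ s, Q i x) :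
    ∑ x with P x, f x ≤ ∑ i ∈ s, ∑ x with Q i x, f x := by
  have hite : ∀ i x, 0 ≤ if Q i x then f x else 0 := fun i x => by split_ifs <;> simp [hf]
  rw [sum_filter, sum_congr rfl fun i _ => sum_filter _ _, sum_comm]
  refine sum_le_sum fun x _ => ?_
  split_ifs with hx
  · obtain ⟨i, hi, hQ⟩ := hPQ x hx
    exact (if_pos hQ).symm.le.trans (single_le_sum (fun j _ => hite j x) hi)
  · exact sum_nonneg fun j _ => hite j x

theorem sum_filter_or_le {P Q : α → Prop} [DecidablePred P] [DecidablePred Q]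
    (hf : ∀ x, 0 ≤ f x) :
    ∑ x with P x ∨ Q x, f x ≤ ∑ x with P x, f x + ∑ x with Q x, f x := by
  rw [filter_or, ← sum_union_inter]
  exact le_add_of_nonneg_right (sum_nonneg fun x _ => hf x)

end UnionBound

theorem sum_bernWeight_pair_tails_le {A B : Type*} [Fintype A] [DecidableEq A] [Fintype B]
    [DecidableEq B] {p δ E c : ℝ} (hp0 : 0 ≤ p) (hp1 : p ≤ 1) (hδ0 : 0 ≤ δ) (hδ1 : δ ≤ 1)
    (hE0 : 0 ≤ E) (hE : E ≤ Fintype.card B * p) (hE' : Fintype.card B * p ≤ E + 1)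
    (hc : Fintype.card B * p ^ 2 ≤ c + 1) {m m' : A} (hm : m ≠ m') :
    ∑ ω : A → B → Bool with (#(idxSet ω m) : ℝ) ≤ (1 - δ) * E ∨
        (1 + δ) * E ≤ #(idxSet ω m') ∨ 2 * c ≤ #(idxSet ω m ∩ idxSet ω m'), bernWeight p ω ≤
      exp (-(E * δ ^ 2 / 4)) + exp (1 - E * δ ^ 2 / 4) + exp (2 - c / 4) := by
  have hw := bernWeight_nonneg (A := A) (B := B) hp0 hp1
  grw [sum_filter_or_le hw, sum_filter_or_le hw,
    sum_bernWeight_le_of_card_idxSet_le hp0 hp1 hδ0 hδ1 hE0 hE m fun ω hω => (mem_filter.1 hω).2,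
    sum_bernWeight_le_of_le_card_idxSet hp0 hp1 hδ0 hδ1 hE0 hE' m' fun ω hω => (mem_filter.1 hω).2,
    sum_bernWeight_le_of_le_card_idxSet_inter hp0 hp1 hc hm fun ω hω => (mem_filter.1 hω).2]
  rw [add_assoc]

theorem sum_bernWeight_not_goodEventG_le {A B : Type*} [Fintype A] [DecidableEq A] [Fintype B]
    [DecidableEq B] {p Rt μ : ℝ} {n : ℕ} (hp0 : 0 ≤ p) (hp1 : p ≤ 1) (hμ : 0 ≤ μ)
    (hE : exp (n * Rt) ≤ Fintype.card B * p) (hE' : Fintype.card B * p ≤ exp (n * Rt) + 1)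
    (hc : Fintype.card B * p ^ 2 ≤ exp (n * (Rt - μ / 2)) + 1) :
    ∑ ω : A → B → Bool with ¬ GoodEventG Rt μ n ω, bernWeight p ω ≤
      Fintype.card A ^ 2 * (3 * exp (2 - exp (n * (Rt - μ)) / 4)) := by
  -- `GoodEventG` intersects the index sets using the classical `DecidableEq` instance.
  obtain rfl : ‹DecidableEq B› = fun a b => Classical.propDecidable (a = b) :=
    Subsingleton.elim _ _
  set δ := exp (-(n * μ / 2))
  set E := exp (n * Rt)
  set c := exp (n * (Rt - μ / 2))
  set Q := exp (n * (Rt - μ))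
  have hn : (0 : ℝ) ≤ n := n.cast_nonneg
  have hδ1 : δ ≤ 1 := exp_le_one_iff.2 (by nlinarith)
  have hQ : E * δ ^ 2 = Q := by
    simp only [E, δ, Q, ← exp_nat_mul, ← exp_add]
    ring_nf
  have hQc : Q ≤ c := exp_le_exp.2 (by nlinarith)
  have hpair (m m' : A) (hm : m ≠ m') :
      ∑ ω : A → B → Bool with (#(idxSet ω m) : ℝ) ≤ (1 - δ) * E ∨
        (1 + δ) * E ≤ #(idxSet ω m') ∨ 2 * c ≤ #(idxSet ω m ∩ idxSet ω m'), bernWeight p ω ≤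
      3 * exp (2 - Q / 4) := by
    grw [sum_bernWeight_pair_tails_le hp0 hp1 (exp_pos _).le hδ1 (exp_pos _).le hE hE' hc hm, hQ]
    linarith [exp_le_exp.2 (by linarith : -(Q / 4) ≤ 2 - Q / 4),
      exp_le_exp.2 (by linarith : 1 - Q / 4 ≤ 2 - Q / 4),
      exp_le_exp.2 (by linarith : 2 - c / 4 ≤ 2 - Q / 4)]
  calc ∑ ω with ¬ GoodEventG Rt μ n ω, bernWeight p ω
      ≤ ∑ mm ∈ univ.filter (fun mm : A × A => mm.1 ≠ mm.2),
          ∑ ω : A → B → Bool with (#(idxSet ω mm.1) : ℝ) ≤ (1 - δ) * E ∨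
            (1 + δ) * E ≤ #(idxSet ω mm.2) ∨ 2 * c ≤ #(idxSet ω mm.1 ∩ idxSet ω mm.2),
            bernWeight p ω := by
        refine sum_filter_le_sum_sum_filter _ (bernWeight_nonneg hp0 hp1) fun ω hω => ?_
        simp only [GoodEventG, not_forall, not_and_or, not_lt] at hω
        obtain ⟨m, m', hm, hbad⟩ := hω
        exact ⟨(m, m'), mem_filter.2 ⟨mem_univ _, hm⟩, hbad⟩
    _ ≤ #(univ.filter fun mm : A × A => mm.1 ≠ mm.2) • (3 * exp (2 - Q / 4)) :=
        sum_le_card_nsmul _ _ _ fun mm hmm => hpair _ _ (mem_filter.1 hmm).2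
    _ ≤ Fintype.card A ^ 2 * (3 * exp (2 - Q / 4)) := by
        rw [nsmul_eq_mul, sq, ← Nat.cast_mul, ← Fintype.card_prod]
        gcongr
        exact card_filter_le _ _

theorem kpool_mul_exp_bounds {Rt Rpool μ : ℝ} (hμ0 : 0 ≤ μ) (hμ : μ ≤ Rpool - Rt) (n : ℕ) :
    exp (n * Rt) ≤ Kpool Rpool n * exp (-(n * (Rpool - Rt))) ∧
      Kpool Rpool n * exp (-(n * (Rpool - Rt))) ≤ exp (n * Rt) + 1 ∧
      Kpool Rpool n * exp (-(n * (Rpool - Rt))) ^ 2 ≤ exp (n * (Rt - μ / 2)) + 1 := by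
  set p := exp (-(n * (Rpool - Rt)))
  have hn : (0 : ℝ) ≤ n := n.cast_nonneg
  have hp0 : 0 ≤ p := (exp_pos _).le
  have hp1 : p ≤ 1 := exp_le_one_iff.2 (neg_nonpos.2 (mul_nonneg hn (by linarith)))
  have hEp : exp (n * Rpool) * p = exp (n * Rt) := by rw [← exp_add]; ring_nf
  have hK : exp (n * Rpool) ≤ Kpool Rpool n := Nat.le_ceil _
  have hK' : (Kpool Rpool n : ℝ) ≤ exp (n * Rpool) + 1 := (Nat.ceil_lt_add_one (exp_pos _).le).le
  have hKp : Kpool Rpool n * p ≤ exp (n * Rt) + p := by nlinarith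
  refine ⟨hEp ▸ mul_le_mul_of_nonneg_right hK hp0, hKp.trans (by linarith), ?_⟩
  have hEpp : exp (n * Rt) * p ≤ exp (n * (Rt - μ / 2)) := by
    rw [← exp_add]; exact exp_le_exp.2 (by nlinarith)
  nlinarith [mul_le_mul_of_nonneg_right hKp hp0]

theorem kmsg_le_two_mul_exp (R : ℝ) (n : ℕ) : (Kmsg R n : ℝ) ≤ 2 * exp (exp (n * R)) :=
  Nat.ceil_le_two_mul (by linarith [one_le_exp (exp_pos (n * R)).le])

theorem tendsto_mul_exp_sub_mul_exp_atBot {r s : ℝ} (hs : 0 < s) (hrs : r < s) (c : ℝ) {d : ℝ}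
    (hd : 0 < d) : Tendsto (fun x : ℝ => c * exp (x * r) - d * exp (x * s)) atTop atBot := by
  have hexp : Tendsto (fun x : ℝ => exp (x * s)) atTop atTop :=
    tendsto_exp_atTop.comp (tendsto_id.atTop_mul_const hs)
  have hratio : Tendsto (fun x : ℝ => c * exp (x * (r - s)) - d) atTop (𝓝 (c * 0 - d)) :=
    ((tendsto_exp_atBot.comp (tendsto_id.atTop_mul_const_of_neg (sub_neg.2 hrs))).const_mul
      c).sub_const d
  refine (hexp.atTop_mul_neg (by linarith) hratio).congr fun x => ?_
  rw [mul_sub, mul_left_comm, ← exp_add]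
  ring_nf

theorem lemma1_prob_not_G_to_zero_general
    (R Rt Rpool μ : ℝ) (h0 : 0 < R)
    (hμ0 : 0 < μ) (hμ : μ < min (Rpool - Rt) (Rt - R)) :
    Filter.Tendsto
      (fun n : ℕ =>
        ∑ ω ∈ Finset.univ.filter
            (fun ω : Fin (Kmsg R n) → Fin (Kpool Rpool n) → Bool =>
              ¬ GoodEventG Rt μ n ω),
          bernWeight (Real.exp (-(n * (Rpool - Rt)))) ω)
      Filter.atTop (nhds 0) := by
  obtain ⟨hμ1, hμ2⟩ := lt_min_iff.1 hμ
  have hp0 (n : ℕ) : 0 ≤ exp (-(n * (Rpool - Rt))) := (exp_pos _).le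
  have hp1 (n : ℕ) : exp (-(n * (Rpool - Rt))) ≤ 1 :=
    exp_le_one_iff.2 (neg_nonpos.2 (mul_nonneg n.cast_nonneg (by linarith)))
  have hlim : Tendsto (fun n : ℕ => 12 * exp ((2 * exp (n * R) - 1 / 4 * exp (n * (Rt - μ))) + 2))
      atTop (𝓝 0) := by
    have hdiff := (tendsto_mul_exp_sub_mul_exp_atBot (by linarith) (by linarith : R < Rt - μ) 2
      (by norm_num : (0 : ℝ) < 1 / 4)).comp tendsto_natCast_atTop_atTop
    simpa using (tendsto_exp_atBot.comp (tendsto_atBot_add_const_right _ 2 hdiff)).const_mul 12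
  refine squeeze_zero (fun n => sum_nonneg fun ω _ => bernWeight_nonneg (hp0 n) (hp1 n) ω)
    (fun n => ?_) hlim
  obtain ⟨hE, hE', hc⟩ := kpool_mul_exp_bounds hμ0.le hμ1.le n
  rw [← Fintype.card_fin (Kpool Rpool n)] at hE hE' hc
  grw [sum_bernWeight_not_goodEventG_le (hp0 n) (hp1 n) hμ0.le hE hE' hc, Fintype.card_fin,
    kmsg_le_two_mul_exp R n, mul_pow, ← exp_nat_mul]
  refine le_of_eq ?_
  rw [mul_assoc, mul_left_comm (exp _), ← exp_add]
  push_cast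
  ring_nf

/-- **Lemma 1.** With each `v ∈ 𝒱` included in the random index set
`V_m` independently with probability `e^{-n(R_pool - R̃)}`, the probability that
`{V_m}` is not in `G_μ` tends to zero as `n → ∞`. -/
theorem lemma1_prob_not_G_to_zero
    (R Rt Rpool μ : ℝ) (h0 : 0 < R) (h1 : R < Rt) (h2 : Rt < Rpool)
    (hμ0 : 0 < μ) (hμ : μ < min (Rpool - Rt) (Rt - R)) :
    Filter.Tendsto
      (fun n : ℕ =>
        ∑ ω ∈ Finset.univ.filter
            (fun ω : Fin (Kmsg R n) → Fin (Kpool Rpool n) → Bool =>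
              ¬ GoodEventG Rt μ n ω),
          bernWeight (Real.exp (-(n * (Rpool - Rt)))) ω)
      Filter.atTop (nhds 0) :=
  lemma1_prob_not_G_to_zero_general R Rt Rpool μ h0 hμ0 hμ
end
end

section
/- (Proposition 3.) For every (n, ℳ, λ₁, λ₂) ID code {(Q_m, 𝒟_m)}_{m∈ℳ} for the DMC W and every δ ≥ (log 2)/n there exists a subset 𝒮 ⊆ ℳ with |𝒮| ≥ |ℳ| · exp(−δ(1+n)^{1+|𝒳|}) and PMFs {Q'_m}_{m∈𝒮} on 𝒳ⁿ such that {(Q'_m, 𝒟_m)}_{m∈𝒮} is a homogeneous (n, 𝒮, λ₁', λ₂') ID code for W with λ₁' = λ₁ + (1+n)^{|𝒳|} e^{−nδ} and λ₂' = λ₂ + (1+n)^{|𝒳|} e^{−nδ}. Moreover, if for some ε, κ > 0 and some R ≥ 0 every m ∈ ℳ satisfies Q_m({𝐱 ∈ 𝒳ⁿ : I(P_𝐱, W) ≤ R − ε}) ≥ κ, then every m ∈ 𝒮 satisfies Q'_m({𝐱 ∈ 𝒳ⁿ : I(P_𝐱, W) ≤ R − ε}) ≥ κ. -/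
open scoped Classical
open Finset

noncomputable section

/-- Empirical type `P_𝐱` of a sequence `𝐱 ∈ Xⁿ`. -/
def empType {X : Type*} [Fintype X] (n : ℕ) (x : Fin n → X) : X → ℝ :=
  fun a => ((Finset.univ.filter (fun i => x i = a)).card : ℝ) / n

/-- `P` is an `n`-type on `X`: a PMF all of whose values are of the form `k/n`. -/
def IsNType {X : Type*} [Fintype X] (n : ℕ) (P : X → ℝ) : Prop :=
  IsPMF P ∧ ∀ a, ∃ k : ℕ, P a = (k : ℝ) / n

/-- The type class `T_P^{(n)}` of all sequences of empirical type `P`. -/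
def typeClass {X : Type*} [Fintype X] (n : ℕ) (P : X → ℝ) : Finset (Fin n → X) :=
  Finset.univ.filter (fun x => empType n x = P)

/-- Homogeneity of a code indexed by the subset `S`: for every `n`-type `P`,
`Q_m(T_P)` does not depend on `m ∈ S` (it equals the average over `S`). -/
def HomogeneousOn {X M : Type*} [Fintype X] (S : Finset M)
    (n : ℕ) (Q : M → (Fin n → X) → ℝ) : Prop :=
  ∀ P : X → ℝ, IsNType n P → ∀ m ∈ S,
    ∑ x ∈ typeClass n P, Q m x = (S.card : ℝ)⁻¹ * ∑ ν ∈ S, ∑ x ∈ typeClass n P, Q ν x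

/-- ID-code error requirements for the subcode indexed by `S`. -/
def IDCodeErrOn {X Y M : Type*} [Fintype X] [Fintype Y] (S : Finset M)
    (n : ℕ) (W : X → Y → ℝ) (Q : M → (Fin n → X) → ℝ)
    (D : M → Finset (Fin n → Y)) (l1 l2 : ℝ) : Prop :=
  (∀ m ∈ S, ∑ x, Q m x * ∑ y ∈ (D m)ᶜ, Wn W n x y ≤ l1) ∧
  (∀ m ∈ S, ∀ m' ∈ S, m ≠ m' → ∑ x, Q m x * ∑ y ∈ D m', Wn W n x y ≤ l2)

set_option linter.unusedSectionVars false


namespace HomogAux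

variable {X : Type} [Fintype X]

/-- Count of occurrences. -/
def cntA (n : ℕ) (x : Fin n → X) (a : X) : ℕ := (Finset.univ.filter (fun i => x i = a)).card

lemma cntA_le (n : ℕ) (x : Fin n → X) (a : X) : cntA n x a ≤ n := by
  calc (Finset.univ.filter (fun i => x i = a)).card
      ≤ (Finset.univ : Finset (Fin n)).card := Finset.card_filter_le _ _
    _ = n := by simp

lemma sum_cntA (n : ℕ) (x : Fin n → X) : ∑ a, cntA n x a = n := by
  have h := Finset.card_eq_sum_card_fiberwise
    (f := x) (s := Finset.univ) (t := Finset.univ) (fun i _ => Finset.mem_univ _)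
  simpa [cntA] using h.symm

/-- Restricted count vector. -/
def rCnt (n : ℕ) (x₀ : X) (x : Fin n → X) : {a : X // a ≠ x₀} → Fin (n+1) :=
  fun a => ⟨cntA n x a.1, Nat.lt_succ_of_le (cntA_le n x a.1)⟩

lemma cnt_eq_of_rCnt_eq {n : ℕ} {x₀ : X} {x x' : Fin n → X}
    (h : rCnt n x₀ x = rCnt n x₀ x') : ∀ a, cntA n x a = cntA n x' a := by
  have hne : ∀ a, a ≠ x₀ → cntA n x a = cntA n x' a := by
    intro a ha
    have := congrFun h ⟨a, ha⟩
    simpa [rCnt, Fin.mk.injEq] using this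
  intro a
  by_cases ha : a = x₀
  · subst ha
    have h1 : cntA n x a + ∑ b ∈ Finset.univ.erase a, cntA n x b = n := by
      rw [Finset.add_sum_erase _ _ (Finset.mem_univ a)]; exact sum_cntA n x
    have h2 : cntA n x' a + ∑ b ∈ Finset.univ.erase a, cntA n x' b = n := by
      rw [Finset.add_sum_erase _ _ (Finset.mem_univ a)]; exact sum_cntA n x'
    have h3 : ∑ b ∈ Finset.univ.erase a, cntA n x b
        = ∑ b ∈ Finset.univ.erase a, cntA n x' b := by
      refine Finset.sum_congr rfl (fun b hb => ?_)
      exact hne b (Finset.mem_erase.mp hb).1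
    omega
  · exact hne a ha



lemma empType_eq_of_rCnt_eq {n : ℕ} {x₀ : X} {x x' : Fin n → X}
    (h : rCnt n x₀ x = rCnt n x₀ x') : empType n x = empType n x' := by
  funext a
  have := cnt_eq_of_rCnt_eq h a
  simp only [empType, cntA] at this ⊢
  rw [show (Finset.univ.filter (fun i => x i = a)).card
      = (Finset.univ.filter (fun i => x' i = a)).card from this]

lemma bucket_close {E : ℝ} (hE : 0 < E) {K : ℕ} (hK : E ≤ K) {a b : ℝ}
    (ha0 : 0 ≤ a) (ha1 : a ≤ 1) (hb0 : 0 ≤ b) (hb1 : b ≤ 1)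
    (h : min ⌊a * E⌋₊ K = min ⌊b * E⌋₊ K) : |a - b| ≤ E⁻¹ := by
  have key : ∀ c : ℝ, 0 ≤ c → c ≤ 1 →
      ((min ⌊c * E⌋₊ K : ℕ) : ℝ) ≤ c * E ∧ c * E ≤ (min ⌊c * E⌋₊ K : ℕ) + 1 := by
    intro c hc0 hc1
    have hcE : 0 ≤ c * E := mul_nonneg hc0 hE.le
    have hcE1 : c * E ≤ E := by nlinarith
    constructor
    · rcases min_cases ⌊c * E⌋₊ K with ⟨hmin, _⟩ | ⟨hmin, hle⟩
      · rw [hmin]; exact Nat.floor_le hcE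
      · rw [hmin]
        calc (K : ℝ) ≤ (⌊c * E⌋₊ : ℝ) := by exact_mod_cast hle.le
          _ ≤ c * E := Nat.floor_le hcE
    · rcases min_cases ⌊c * E⌋₊ K with ⟨hmin, _⟩ | ⟨hmin, _⟩
      · rw [hmin]; exact (Nat.lt_floor_add_one (c * E)).le
      · rw [hmin]; linarith [hcE1, hK]
  obtain ⟨h1a, h2a⟩ := key a ha0 ha1
  obtain ⟨h1b, h2b⟩ := key b hb0 hb1
  rw [h] at h1a h2a
  have habs : |a * E - b * E| ≤ 1 := by rw [abs_le]; constructor <;> linarith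
  have : |a - b| * E ≤ 1 := by
    calc |a - b| * E = |a - b| * |E| := by rw [abs_of_pos hE]
      _ = |a * E - b * E| := by rw [← abs_mul]; ring_nf
      _ ≤ 1 := habs
  rw [inv_eq_one_div, le_div_iff₀ hE]
  exact this

lemma exists_big_fiber {α β : Type*} [Fintype α] [Fintype β] [DecidableEq β] [Nonempty β] (f : α → β) :
    ∃ y : β, Fintype.card α ≤ Fintype.card β * (Finset.univ.filter (fun a => f a = y)).card := by
  obtain ⟨y, -, hy⟩ := Finset.exists_max_image Finset.univ
    (fun y => (Finset.univ.filter (fun a => f a = y)).card)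
    ⟨Classical.arbitrary β, Finset.mem_univ _⟩
  refine ⟨y, ?_⟩
  calc Fintype.card α = ∑ b : β, (Finset.univ.filter (fun a => f a = b)).card := by
        rw [← Finset.card_univ, Finset.card_eq_sum_card_fiberwise
          (fun a _ => Finset.mem_univ (f a))]
    _ ≤ ∑ _b : β, (Finset.univ.filter (fun a => f a = y)).card :=
        Finset.sum_le_sum (fun b _ => hy b (Finset.mem_univ b))
    _ = Fintype.card β * _ := by
        rw [Finset.sum_const, smul_eq_mul, Finset.card_univ]

lemma sum_Wn_le_one {Y : Type} [Fintype Y] {W : X → Y → ℝ} (hW : IsChannel W)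
    (n : ℕ) (x : Fin n → X) (B : Finset (Fin n → Y)) :
    ∑ y ∈ B, Wn W n x y ≤ 1 := by
  have h1 : ∑ y : Fin n → Y, Wn W n x y = 1 := by
    simp only [Wn]
    rw [← Fintype.piFinset_univ,
      ← Finset.prod_univ_sum (fun _ => Finset.univ) (fun i y => W (x i) y)]
    simp [hW.2]
  calc ∑ y ∈ B, Wn W n x y ≤ ∑ y : Fin n → Y, Wn W n x y := by
        apply Finset.sum_le_sum_of_subset_of_nonneg (Finset.subset_univ B)
        intro y _ _
        exact Finset.prod_nonneg (fun i _ => hW.1 _ _)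
    _ = 1 := h1

lemma Wn_nonneg {Y : Type} [Fintype Y] {W : X → Y → ℝ} (hW : IsChannel W)
    (n : ℕ) (x : Fin n → X) (B : Finset (Fin n → Y)) :
    0 ≤ ∑ y ∈ B, Wn W n x y :=
  Finset.sum_nonneg fun y _ => Finset.prod_nonneg (fun i _ => hW.1 _ _)

lemma core {M : Type} [Fintype M] (n : ℕ) (x₀ : X)
    (Q : M → (Fin n → X) → ℝ) (S : Finset M) (hS : S.Nonempty)
    (hPMF : ∀ m, IsPMF (Q m)) (c : ℝ) (hc : 0 ≤ c)
    (hclose : ∀ m ∈ S, ∀ ν ∈ S, ∀ v : {a : X // a ≠ x₀} → Fin (n+1),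
      |(∑ x ∈ Finset.univ.filter (fun x => rCnt n x₀ x = v), Q m x) -
       (∑ x ∈ Finset.univ.filter (fun x => rCnt n x₀ x = v), Q ν x)| ≤ c) :
    ∃ Q' : M → (Fin n → X) → ℝ,
      (∀ m, IsPMF (Q' m)) ∧
      (∀ L : Finset (Fin n → X),
        (∀ x x', rCnt n x₀ x = rCnt n x₀ x' → (x ∈ L ↔ x' ∈ L)) →
        ∀ m, ∑ x ∈ L, Q' m x = (S.card : ℝ)⁻¹ * ∑ ν ∈ S, ∑ x ∈ L, Q ν x) ∧
      (∀ m ∈ S, ∀ g : (Fin n → X) → ℝ, (∀ x, 0 ≤ g x) → (∀ x, g x ≤ 1) →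
        |∑ x, Q' m x * g x - ∑ x, Q m x * g x|
          ≤ (Fintype.card ({a : X // a ≠ x₀} → Fin (n+1)) : ℝ) * c) := by
  set V := ({a : X // a ≠ x₀} → Fin (n+1)) with hV
  set Cl : V → Finset (Fin n → X) :=
    fun v => Finset.univ.filter (fun x => rCnt n x₀ x = v) with hCl
  set A : M → V → ℝ := fun m v => ∑ x ∈ Cl v, Q m x with hAdef
  set qb : V → ℝ := fun v => (S.card : ℝ)⁻¹ * ∑ ν ∈ S, A ν v with hqbdef
  have hScard : (0:ℝ) < S.card := by exact_mod_cast Finset.card_pos.mpr hS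
  have hA0 : ∀ m v, 0 ≤ A m v := fun m v => Finset.sum_nonneg fun x _ => (hPMF m).1 x
  have hqb0 : ∀ v, 0 ≤ qb v := fun v =>
    mul_nonneg (inv_nonneg.mpr hScard.le) (Finset.sum_nonneg fun ν _ => hA0 ν v)
  have hmem : ∀ (v : V) (x), x ∈ Cl v ↔ rCnt n x₀ x = v := by
    intro v x; simp [hCl]
  set Q' : M → (Fin n → X) → ℝ := fun m x =>
    if A m (rCnt n x₀ x) = 0
    then qb (rCnt n x₀ x) / (Cl (rCnt n x₀ x)).card
    else qb (rCnt n x₀ x) * Q m x / A m (rCnt n x₀ x) with hQ'def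
  have hQ'eq1 : ∀ m x (v : V), rCnt n x₀ x = v → A m v = 0 →
      Q' m x = qb v / (Cl v).card := by
    intro m x v hv hz
    rw [hQ'def]; simp only [hv]; rw [if_pos hz]
  have hQ'eq2 : ∀ m x (v : V), rCnt n x₀ x = v → A m v ≠ 0 →
      Q' m x = qb v * Q m x / A m v := by
    intro m x v hv hz
    rw [hQ'def]; simp only [hv]; rw [if_neg hz]
  have hQ'0 : ∀ m x, 0 ≤ Q' m x := by
    intro m x
    by_cases hz : A m (rCnt n x₀ x) = 0
    · rw [hQ'eq1 m x _ rfl hz]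
      exact div_nonneg (hqb0 _) (Nat.cast_nonneg _)
    · rw [hQ'eq2 m x _ rfl hz]
      exact div_nonneg (mul_nonneg (hqb0 _) ((hPMF m).1 x)) (hA0 m _)
  -- sum of Q' over a fiber
  have hQ'fib : ∀ m (v : V), ∑ x ∈ Cl v, Q' m x = qb v := by
    intro m v
    rcases Finset.eq_empty_or_nonempty (Cl v) with hemp | hne
    · have hz : ∀ ν, A ν v = 0 := by
        intro ν; rw [hAdef]; simp only []; rw [hemp, Finset.sum_empty]
      rw [hemp, Finset.sum_empty, hqbdef]; simp only []
      rw [Finset.sum_congr rfl (fun ν _ => hz ν), Finset.sum_const, smul_zero, mul_zero]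
    · have hcard : ((Cl v).card : ℝ) ≠ 0 := by
        exact_mod_cast (Finset.card_pos.mpr hne).ne'
      by_cases hz : A m v = 0
      · rw [Finset.sum_congr rfl (fun x hx => hQ'eq1 m x v ((hmem v x).1 hx) hz),
          Finset.sum_const, nsmul_eq_mul]
        field_simp
      · rw [Finset.sum_congr rfl (fun x hx => hQ'eq2 m x v ((hmem v x).1 hx) hz)]
        have h1 : ∑ x ∈ Cl v, qb v * Q m x / A m v
            = (qb v / A m v) * ∑ x ∈ Cl v, Q m x := by
          rw [Finset.mul_sum]; exact Finset.sum_congr rfl (fun x _ => by ring)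
        rw [h1, show ∑ x ∈ Cl v, Q m x = A m v from rfl]
        field_simp
  -- fiberwise decomposition of sums
  have hfibsum : ∀ f : (Fin n → X) → ℝ, ∑ v : V, ∑ x ∈ Cl v, f x = ∑ x, f x := by
    intro f
    simp only [hCl]
    exact Finset.sum_fiberwise Finset.univ (rCnt n x₀) f
  -- the main averaging identity
  have hmain : ∀ L : Finset (Fin n → X),
      (∀ x x', rCnt n x₀ x = rCnt n x₀ x' → (x ∈ L ↔ x' ∈ L)) →
      ∀ m, ∑ x ∈ L, Q' m x = (S.card : ℝ)⁻¹ * ∑ ν ∈ S, ∑ x ∈ L, Q ν x := by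
    intro L compat m
    have key : ∀ (v : V) (f : (Fin n → X) → ℝ) (r : ℝ), (∑ x ∈ Cl v, f x = r) →
        ∑ x ∈ Cl v, (if x ∈ L then f x else 0)
          = if ∃ x ∈ Cl v, x ∈ L then r else 0 := by
      intro v f r hfr
      by_cases hpv : ∃ x ∈ Cl v, x ∈ L
      · rw [if_pos hpv]
        obtain ⟨xs, hxsc, hxsL⟩ := hpv
        rw [← hfr]
        refine Finset.sum_congr rfl (fun x hx => ?_)
        rw [if_pos]
        exact (compat x xs (by rw [(hmem v x).1 hx, (hmem v xs).1 hxsc])).mpr hxsL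
      · rw [if_neg hpv]
        refine Finset.sum_eq_zero (fun x hx => ?_)
        rw [if_neg]
        exact fun hxL => hpv ⟨x, hx, hxL⟩
    have hLsum : ∀ f : (Fin n → X) → ℝ,
        ∑ x ∈ L, f x = ∑ v : V, ∑ x ∈ Cl v, (if x ∈ L then f x else 0) := by
      intro f
      rw [hfibsum (fun x => if x ∈ L then f x else 0), Finset.sum_ite_mem,
        Finset.univ_inter]
    have hL1 : ∑ x ∈ L, Q' m x = ∑ v : V, if ∃ x ∈ Cl v, x ∈ L then qb v else 0 := by
      rw [hLsum (Q' m)]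
      exact Finset.sum_congr rfl (fun v _ => key v (Q' m) (qb v) (hQ'fib m v))
    have hL2 : ∀ ν, ∑ x ∈ L, Q ν x
        = ∑ v : V, if ∃ x ∈ Cl v, x ∈ L then A ν v else 0 := by
      intro ν
      rw [hLsum (Q ν)]
      exact Finset.sum_congr rfl (fun v _ => key v (Q ν) (A ν v) rfl)
    rw [hL1]
    rw [Finset.sum_congr rfl (fun ν _ => hL2 ν), Finset.sum_comm, Finset.mul_sum]
    refine Finset.sum_congr rfl (fun v _ => ?_)
    by_cases hpv : ∃ x ∈ Cl v, x ∈ L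
    · simp only [if_pos hpv, hqbdef]
    · simp only [if_neg hpv, Finset.sum_const_zero, mul_zero]
  -- PMF property
  have hPMF' : ∀ m, IsPMF (Q' m) := by
    intro m
    refine ⟨hQ'0 m, ?_⟩
    have := hmain Finset.univ (fun x x' _ => by simp) m
    rw [show ∑ x, Q' m x = ∑ x ∈ Finset.univ, Q' m x from rfl, this]
    rw [Finset.sum_congr rfl (fun ν _ => (hPMF ν).2), Finset.sum_const, nsmul_eq_mul,
      mul_one, inv_mul_cancel₀ hScard.ne']
  refine ⟨Q', hPMF', hmain, ?_⟩
  -- error bound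
  intro m hm g hg0 hg1
  have hAqb : ∀ v : V, |A m v - qb v| ≤ c := by
    intro v
    have h1 : (S.card : ℝ) * (A m v - qb v) = ∑ ν ∈ S, (A m v - A ν v) := by
      rw [Finset.sum_sub_distrib, Finset.sum_const, nsmul_eq_mul, hqbdef]
      simp only []
      field_simp
    have h2 : |∑ ν ∈ S, (A m v - A ν v)| ≤ S.card * c := by
      calc |∑ ν ∈ S, (A m v - A ν v)| ≤ ∑ ν ∈ S, |A m v - A ν v| :=
            Finset.abs_sum_le_sum_abs _ _
        _ ≤ ∑ _ν ∈ S, c := Finset.sum_le_sum (fun ν hν => hclose m hm ν hν v)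
        _ = S.card * c := by rw [Finset.sum_const, nsmul_eq_mul]
    have h3 : |A m v - qb v| * (S.card : ℝ) ≤ S.card * c := by
      calc |A m v - qb v| * (S.card : ℝ) = |(S.card : ℝ) * (A m v - qb v)| := by
            rw [abs_mul, abs_of_pos hScard]; ring
        _ = |∑ ν ∈ S, (A m v - A ν v)| := by rw [h1]
        _ ≤ S.card * c := h2
    nlinarith
  have hfb : ∀ v : V, |∑ x ∈ Cl v, (Q' m x * g x - Q m x * g x)| ≤ c := by
    intro v
    rcases Finset.eq_empty_or_nonempty (Cl v) with hemp | hne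
    · rw [hemp, Finset.sum_empty, abs_zero]; exact hc
    · by_cases hz : A m v = 0
      · have hQ0 : ∀ x ∈ Cl v, Q m x = 0 := by
          have := (Finset.sum_eq_zero_iff_of_nonneg
            (fun x (_ : x ∈ Cl v) => (hPMF m).1 x)).1 hz
          exact this
        have hcard : (0:ℝ) < (Cl v).card := by
          exact_mod_cast Finset.card_pos.mpr hne
        have heq : ∀ x ∈ Cl v, Q' m x * g x - Q m x * g x
            = qb v / (Cl v).card * g x := by
          intro x hx
          rw [hQ0 x hx, hQ'eq1 m x v ((hmem v x).1 hx) hz]; ring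
        rw [Finset.sum_congr rfl heq]
        have h4 : ∑ x ∈ Cl v, qb v / (Cl v).card * g x ≤ qb v := by
          calc ∑ x ∈ Cl v, qb v / (Cl v).card * g x
              ≤ ∑ _x ∈ Cl v, qb v / (Cl v).card := by
                refine Finset.sum_le_sum (fun x _ => ?_)
                have := div_nonneg (hqb0 v) hcard.le
                nlinarith [hg1 x, hg0 x]
            _ = (Cl v).card * (qb v / (Cl v).card) := by
                rw [Finset.sum_const, nsmul_eq_mul]
            _ = qb v := by field_simp
        have h5 : 0 ≤ ∑ x ∈ Cl v, qb v / (Cl v).card * g x :=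
          Finset.sum_nonneg fun x _ =>
            mul_nonneg (div_nonneg (hqb0 v) hcard.le) (hg0 x)
        have h6 := hAqb v
        rw [hz, zero_sub, abs_neg, abs_of_nonneg (hqb0 v)] at h6
        rw [abs_of_nonneg h5]
        linarith
      · have hApos : 0 < A m v := lt_of_le_of_ne (hA0 m v) (Ne.symm hz)
        have heq : ∀ x ∈ Cl v, Q' m x * g x - Q m x * g x
            = (qb v / A m v - 1) * (Q m x * g x) := by
          intro x hx
          rw [hQ'eq2 m x v ((hmem v x).1 hx) hz]
          field_simp
        rw [Finset.sum_congr rfl heq, ← Finset.mul_sum]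
        have ht0 : 0 ≤ ∑ x ∈ Cl v, Q m x * g x :=
          Finset.sum_nonneg fun x _ => mul_nonneg ((hPMF m).1 x) (hg0 x)
        have htA : ∑ x ∈ Cl v, Q m x * g x ≤ A m v := by
          rw [show A m v = ∑ x ∈ Cl v, Q m x from rfl]
          refine Finset.sum_le_sum (fun x _ => ?_)
          nlinarith [(hPMF m).1 x, hg1 x, hg0 x]
        rw [abs_mul]
        calc |qb v / A m v - 1| * |∑ x ∈ Cl v, Q m x * g x|
            ≤ |qb v / A m v - 1| * A m v := by
              refine mul_le_mul_of_nonneg_left ?_ (abs_nonneg _)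
              rw [abs_of_nonneg ht0]; exact htA
          _ = |qb v - A m v| := by
              rw [show qb v / A m v - 1 = (qb v - A m v) / A m v by field_simp,
                abs_div, abs_of_pos hApos, div_mul_cancel₀ _ hApos.ne']
          _ ≤ c := by rw [abs_sub_comm]; exact hAqb v
  calc |∑ x, Q' m x * g x - ∑ x, Q m x * g x|
      = |∑ v : V, ∑ x ∈ Cl v, (Q' m x * g x - Q m x * g x)| := by
        rw [hfibsum (fun x => Q' m x * g x - Q m x * g x), Finset.sum_sub_distrib]
    _ ≤ ∑ v : V, |∑ x ∈ Cl v, (Q' m x * g x - Q m x * g x)| :=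
        Finset.abs_sum_le_sum_abs _ _
    _ ≤ ∑ _v : V, c := Finset.sum_le_sum (fun v _ => hfb v)
    _ = (Fintype.card V : ℝ) * c := by
        rw [Finset.sum_const, nsmul_eq_mul, Finset.card_univ]

end HomogAux

set_option maxHeartbeats 1000000 in
/-- **Proposition 3.** From any `(n, ℳ, λ₁, λ₂)` ID code one can
extract, for every `δ ≥ (log 2)/n`, a large subset `S ⊆ ℳ` carrying a
homogeneous `(n, S, λ₁', λ₂')` ID code with the same decoding sets; moreover
the mass placed on low-mutual-information empirical types is preserved. -/
theorem homogeneous_subcode_extraction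
    {X Y M : Type} [Fintype X] [Fintype Y] [Fintype M]
    [Nonempty X] [Nonempty Y]
    (W : X → Y → ℝ) (hW : IsChannel W)
    (n : ℕ) (Q : M → (Fin n → X) → ℝ) (D : M → Finset (Fin n → Y))
    (l1 l2 δ : ℝ) (hcode : IsIDCode n W Q D l1 l2)
    (hδ : Real.log 2 / n ≤ δ) :
    ∃ S : Finset M,
      (Fintype.card M : ℝ) * Real.exp (-(δ * (1 + (n : ℝ)) ^ (1 + Fintype.card X)))
        ≤ (S.card : ℝ) ∧
      ∃ Q' : M → (Fin n → X) → ℝ,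
        (∀ m ∈ S, IsPMF (Q' m)) ∧
        HomogeneousOn S n Q' ∧
        IDCodeErrOn S n W Q' D
          (l1 + (1 + (n : ℝ)) ^ (Fintype.card X) * Real.exp (-(n * δ)))
          (l2 + (1 + (n : ℝ)) ^ (Fintype.card X) * Real.exp (-(n * δ))) ∧
        ∀ (ε κ R : ℝ), 0 < ε → 0 < κ → 0 ≤ R →
          (∀ m : M,
            κ ≤ ∑ x ∈ Finset.univ.filter (fun x => mutInf (empType n x) W ≤ R - ε), Q m x) →
          ∀ m ∈ S,
            κ ≤ ∑ x ∈ Finset.univ.filter (fun x => mutInf (empType n x) W ≤ R - ε), Q' m x := by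
  classical
  rcases Nat.eq_zero_or_pos n with hn0 | hnpos
  · -- degenerate case n = 0
    subst hn0
    have hδ0 : 0 ≤ δ := by simpa using hδ
    have hexp1 : Real.exp (-(δ * (1 + ((0:ℕ):ℝ)) ^ (1 + Fintype.card X))) ≤ 1 := by
      rw [Real.exp_le_one_iff, neg_nonpos]
      positivity
    refine ⟨Finset.univ, ?_, Q, fun m _ => hcode.1 m, ?_, ?_, ?_⟩
    · rw [Finset.card_univ]
      calc (Fintype.card M : ℝ) * Real.exp (-(δ * (1 + ((0:ℕ):ℝ)) ^ (1 + Fintype.card X)))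
          ≤ (Fintype.card M : ℝ) * 1 :=
            mul_le_mul_of_nonneg_left hexp1 (Nat.cast_nonneg _)
        _ = (Fintype.card M : ℝ) := mul_one _
    · intro P hP m hm
      exfalso
      have hz : ∀ a, P a = 0 := by
        intro a
        obtain ⟨k, hk⟩ := hP.2 a
        simpa using hk
      have h1 := hP.1.2
      rw [Finset.sum_congr rfl (fun a _ => hz a), Finset.sum_const, smul_zero] at h1
      norm_num at h1
    · have hs : (0:ℝ) ≤ (1 + ((0:ℕ):ℝ)) ^ (Fintype.card X)
          * Real.exp (-(((0:ℕ):ℝ) * δ)) := by positivity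
      constructor
      · intro m _
        linarith [hcode.2.1 m]
      · intro m _ m' _ hne
        linarith [hcode.2.2 m m' hne]
    · intro ε κ R _ _ _ hall m _
      exact hall m
  rcases isEmpty_or_nonempty M with hM | hM
  · -- degenerate case: no messages
    have hM0 : Fintype.card M = 0 := Fintype.card_eq_zero
    refine ⟨∅, by rw [hM0]; simp, Q, ?_, ?_, ⟨?_, ?_⟩, ?_⟩
    · intro m hm; exact absurd hm (Finset.notMem_empty m)
    · intro P hP m hm; exact absurd hm (Finset.notMem_empty m)
    · intro m hm; exact absurd hm (Finset.notMem_empty m)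
    · intro m hm; exact absurd hm (Finset.notMem_empty m)
    · intro ε κ R _ _ _ _ m hm; exact absurd hm (Finset.notMem_empty m)
  -- main case
  have hX1 : 1 ≤ Fintype.card X := Fintype.card_pos
  have x₀ : X := Classical.arbitrary X
  set E := Real.exp ((n:ℝ) * δ) with hE
  have hEpos : 0 < E := Real.exp_pos _
  have hnR : (0:ℝ) < (n:ℝ) := by exact_mod_cast hnpos
  have hlog2 : Real.log 2 ≤ (n:ℝ) * δ := by
    rw [div_le_iff₀ hnR] at hδ
    linarith
  have hE2 : 2 ≤ E := by
    calc (2:ℝ) = Real.exp (Real.log 2) := (Real.exp_log two_pos).symm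
      _ ≤ E := Real.exp_le_exp.mpr hlog2
  set K := ⌈E⌉₊ with hK
  have hEK : E ≤ (K:ℝ) := Nat.le_ceil E
  set F : M → (({a : X // a ≠ x₀} → Fin (n+1)) → Fin (K+1)) := fun m v =>
    ⟨min ⌊(∑ x ∈ Finset.univ.filter (fun x => HomogAux.rCnt n x₀ x = v), Q m x) * E⌋₊ K,
     Nat.lt_succ_of_le (min_le_right _ _)⟩ with hF
  have : Nonempty (({a : X // a ≠ x₀} → Fin (n+1)) → Fin (K+1)) := ⟨fun _ => 0⟩
  obtain ⟨p, hp⟩ := HomogAux.exists_big_fiber F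
  set S := Finset.univ.filter (fun a => F a = p) with hS
  have hSne : S.Nonempty := by
    by_contra h
    rw [Finset.not_nonempty_iff_eq_empty] at h
    rw [h, Finset.card_empty, mul_zero] at hp
    have := Fintype.card_pos (α := M)
    omega
  have hScardne : ((S.card : ℕ) : ℝ) ≠ 0 := by
    exact_mod_cast (Finset.card_pos.mpr hSne).ne'
  have hQ01 : ∀ (m : M) v, (0:ℝ)
      ≤ ∑ x ∈ Finset.univ.filter (fun x => HomogAux.rCnt n x₀ x = v), Q m x :=
    fun m v => Finset.sum_nonneg fun x _ => (hcode.1 m).1 x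
  have hQle1 : ∀ (m : M) v,
      (∑ x ∈ Finset.univ.filter (fun x => HomogAux.rCnt n x₀ x = v), Q m x) ≤ 1 := by
    intro m v
    calc ∑ x ∈ Finset.univ.filter (fun x => HomogAux.rCnt n x₀ x = v), Q m x
        ≤ ∑ x, Q m x := Finset.sum_le_sum_of_subset_of_nonneg
          (Finset.filter_subset _ _) (fun x _ _ => (hcode.1 m).1 x)
      _ = 1 := (hcode.1 m).2
  have hclose : ∀ m ∈ S, ∀ ν ∈ S, ∀ v : {a : X // a ≠ x₀} → Fin (n+1),
      |(∑ x ∈ Finset.univ.filter (fun x => HomogAux.rCnt n x₀ x = v), Q m x) -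
       (∑ x ∈ Finset.univ.filter (fun x => HomogAux.rCnt n x₀ x = v), Q ν x)| ≤ E⁻¹ := by
    intro m hm ν hν v
    apply HomogAux.bucket_close hEpos hEK (hQ01 m v) (hQle1 m v) (hQ01 ν v) (hQle1 ν v)
    have h1 : F m = p := (Finset.mem_filter.mp hm).2
    have h2 : F ν = p := (Finset.mem_filter.mp hν).2
    have h3 : (F m v).val = (F ν v).val := by rw [congrFun h1 v, congrFun h2 v]
    simpa [hF] using h3
  obtain ⟨Q', hPMF', hmain, herrb⟩ := HomogAux.core n x₀ Q S hSne hcode.1 E⁻¹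
    (inv_nonneg.mpr hEpos.le) hclose
  -- cardinality computations
  have hcardsub : Fintype.card {a : X // a ≠ x₀} = Fintype.card X - 1 := by
    calc Fintype.card {a : X // a ≠ x₀}
        = Fintype.card X - Fintype.card {a : X // a = x₀} :=
          Fintype.card_subtype_compl _
      _ = Fintype.card X - 1 := by rw [Fintype.card_subtype_eq]
  have hcardV : Fintype.card ({a : X // a ≠ x₀} → Fin (n+1))
      = (n+1) ^ (Fintype.card X - 1) := by
    rw [Fintype.card_fun, Fintype.card_fin, hcardsub]
  have hcardPi : Fintype.card (({a : X // a ≠ x₀} → Fin (n+1)) → Fin (K+1))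
      = (K+1) ^ ((n+1) ^ (Fintype.card X - 1)) := by
    rw [Fintype.card_fun, Fintype.card_fin, hcardV]
  -- arithmetic
  have hδpos : 0 < δ := by
    by_contra h
    push_neg at h
    nlinarith [Real.log_two_gt_d9, mul_nonpos_of_nonneg_of_nonpos hnR.le h]
  have hn1 : (1:ℝ) ≤ (n:ℝ) := by exact_mod_cast hnpos
  have hKb : ((K:ℝ) + 1) ≤ Real.exp ((n:ℝ) * δ + 1) := by
    have h1 : (K:ℝ) < E + 1 := by rw [hK]; exact Nat.ceil_lt_add_one hEpos.le
    have h2 : Real.exp ((n:ℝ) * δ + 1) = E * Real.exp 1 := by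
      rw [hE, Real.exp_add]
    nlinarith [Real.exp_one_gt_d9]
  have hkey : (n:ℝ) * δ + 1 ≤ δ * (1 + (n:ℝ)) ^ 2 := by
    have hlt : (0:ℝ) < Real.log 2 := lt_trans (by norm_num) Real.log_two_gt_d9
    have hB : Real.log 2 * (n:ℝ) ≤ ((n:ℝ) * δ) * (n:ℝ) :=
      mul_le_mul_of_nonneg_right hlog2 hnR.le
    have hC : Real.log 2 ≤ Real.log 2 * (n:ℝ) := by
      nlinarith [mul_nonneg (sub_nonneg.mpr hn1) hlt.le]
    have hexp : δ * (1 + (n:ℝ)) ^ 2 = δ + 2 * ((n:ℝ) * δ) + ((n:ℝ) * δ) * (n:ℝ) := by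
      ring
    rw [hexp]
    linarith [Real.log_two_gt_d9, hδpos]
  have hbound : (((K:ℕ):ℝ) + 1) ^ ((n+1) ^ (Fintype.card X - 1))
      ≤ Real.exp (δ * (1 + (n:ℝ)) ^ (1 + Fintype.card X)) := by
    have hTnn : (0:ℝ) ≤ ((n:ℝ) + 1) ^ (Fintype.card X - 1) := by positivity
    calc (((K:ℕ):ℝ) + 1) ^ ((n+1) ^ (Fintype.card X - 1))
        ≤ (Real.exp ((n:ℝ) * δ + 1)) ^ ((n+1) ^ (Fintype.card X - 1)) := by
          apply pow_le_pow_left₀ (by positivity) hKb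
      _ = Real.exp (((n+1) ^ (Fintype.card X - 1) : ℕ) * ((n:ℝ) * δ + 1)) := by
          rw [← Real.exp_nat_mul]
      _ ≤ Real.exp (δ * (1 + (n:ℝ)) ^ (1 + Fintype.card X)) := by
          apply Real.exp_le_exp.mpr
          have hcast : (((n+1) ^ (Fintype.card X - 1) : ℕ) : ℝ)
              = ((n:ℝ) + 1) ^ (Fintype.card X - 1) := by push_cast; ring
          rw [hcast, show 1 + Fintype.card X = (Fintype.card X - 1) + 2 by omega,
            pow_add]
          calc ((n:ℝ) + 1) ^ (Fintype.card X - 1) * ((n:ℝ) * δ + 1)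
              ≤ ((n:ℝ) + 1) ^ (Fintype.card X - 1) * (δ * (1 + (n:ℝ)) ^ 2) :=
                mul_le_mul_of_nonneg_left hkey hTnn
            _ = δ * ((1 + (n:ℝ)) ^ (Fintype.card X - 1) * (1 + (n:ℝ)) ^ 2) := by
                rw [show (n:ℝ) + 1 = 1 + (n:ℝ) by ring]; ring
  refine ⟨S, ?_, Q', fun m _ => hPMF' m, ?_, ⟨?_, ?_⟩, ?_⟩
  · -- cardinality bound
    have hpR : (Fintype.card M : ℝ)
        ≤ (((K:ℕ):ℝ) + 1) ^ ((n+1) ^ (Fintype.card X - 1)) * S.card := by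
      rw [hcardPi] at hp
      exact_mod_cast hp
    have hexpnn := (Real.exp_pos (δ * (1 + (n:ℝ)) ^ (1 + Fintype.card X))).le
    calc (Fintype.card M : ℝ) * Real.exp (-(δ * (1 + (n:ℝ)) ^ (1 + Fintype.card X)))
        ≤ ((((K:ℕ):ℝ) + 1) ^ ((n+1) ^ (Fintype.card X - 1)) * S.card)
            * Real.exp (-(δ * (1 + (n:ℝ)) ^ (1 + Fintype.card X))) :=
          mul_le_mul_of_nonneg_right hpR (Real.exp_pos _).le
      _ ≤ (Real.exp (δ * (1 + (n:ℝ)) ^ (1 + Fintype.card X)) * S.card)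
            * Real.exp (-(δ * (1 + (n:ℝ)) ^ (1 + Fintype.card X))) := by
          apply mul_le_mul_of_nonneg_right _ (Real.exp_pos _).le
          exact mul_le_mul_of_nonneg_right hbound (Nat.cast_nonneg _)
      _ = (S.card : ℝ) * Real.exp (δ * (1 + (n:ℝ)) ^ (1 + Fintype.card X)
            + -(δ * (1 + (n:ℝ)) ^ (1 + Fintype.card X))) := by
          rw [Real.exp_add]; ring
      _ = (S.card : ℝ) := by rw [add_neg_cancel, Real.exp_zero, mul_one]
  · -- homogeneity
    intro P hP m hm
    have compat : ∀ x x', HomogAux.rCnt n x₀ x = HomogAux.rCnt n x₀ x' →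
        (x ∈ typeClass n P ↔ x' ∈ typeClass n P) := by
      intro x x' h
      have he := HomogAux.empType_eq_of_rCnt_eq h
      simp only [typeClass, Finset.mem_filter, Finset.mem_univ, true_and, he]
    have hval := hmain (typeClass n P) compat
    have hsum2 : ∑ ν ∈ S, ∑ x ∈ typeClass n P, Q' ν x
        = (S.card : ℝ) * ((S.card : ℝ)⁻¹ * ∑ ν ∈ S, ∑ x ∈ typeClass n P, Q ν x) := by
      rw [Finset.sum_congr rfl (fun ν _ => hval ν), Finset.sum_const, nsmul_eq_mul]
    rw [hval m, hsum2, ← mul_assoc, inv_mul_cancel₀ hScardne, one_mul]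
  · -- missed identification error
    intro m hm
    have hg0 := fun x => HomogAux.Wn_nonneg hW n x (D m)ᶜ
    have hg1 := fun x => HomogAux.sum_Wn_le_one hW n x (D m)ᶜ
    have hb := herrb m hm (fun x => ∑ y ∈ (D m)ᶜ, Wn W n x y) hg0 hg1
    have horig := hcode.2.1 m
    have hslack : (Fintype.card ({a : X // a ≠ x₀} → Fin (n+1)) : ℝ) * E⁻¹
        ≤ (1 + (n:ℝ)) ^ (Fintype.card X) * Real.exp (-((n:ℝ) * δ)) := by
      rw [hcardV, hE, ← Real.exp_neg]
      apply mul_le_mul_of_nonneg_right _ (Real.exp_pos _).le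
      push_cast
      calc ((n:ℝ) + 1) ^ (Fintype.card X - 1)
          ≤ ((n:ℝ) + 1) ^ (Fintype.card X) :=
            pow_le_pow_right₀ (by linarith) (Nat.sub_le _ _)
        _ = (1 + (n:ℝ)) ^ (Fintype.card X) := by rw [add_comm]
    have habs := (abs_le.mp hb).2
    linarith
  · -- wrong identification error
    intro m hm m' hm' hne
    have hg0 := fun x => HomogAux.Wn_nonneg hW n x (D m')
    have hg1 := fun x => HomogAux.sum_Wn_le_one hW n x (D m')
    have hb := herrb m hm (fun x => ∑ y ∈ D m', Wn W n x y) hg0 hg1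
    have horig := hcode.2.2 m m' hne
    have hslack : (Fintype.card ({a : X // a ≠ x₀} → Fin (n+1)) : ℝ) * E⁻¹
        ≤ (1 + (n:ℝ)) ^ (Fintype.card X) * Real.exp (-((n:ℝ) * δ)) := by
      rw [hcardV, hE, ← Real.exp_neg]
      apply mul_le_mul_of_nonneg_right _ (Real.exp_pos _).le
      push_cast
      calc ((n:ℝ) + 1) ^ (Fintype.card X - 1)
          ≤ ((n:ℝ) + 1) ^ (Fintype.card X) :=
            pow_le_pow_right₀ (by linarith) (Nat.sub_le _ _)
        _ = (1 + (n:ℝ)) ^ (Fintype.card X) := by rw [add_comm]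
    have habs := (abs_le.mp hb).2
    linarith
  · -- preserved low mutual-information mass
    intro ε κ R hε hκ hR hall m hm
    have compat : ∀ x x', HomogAux.rCnt n x₀ x = HomogAux.rCnt n x₀ x' →
        (x ∈ Finset.univ.filter (fun x => mutInf (empType n x) W ≤ R - ε)
          ↔ x' ∈ Finset.univ.filter (fun x => mutInf (empType n x) W ≤ R - ε)) := by
      intro x x' h
      have he := HomogAux.empType_eq_of_rCnt_eq h
      simp only [Finset.mem_filter, Finset.mem_univ, true_and, he]
    have h1 : (S.card : ℝ) * κ
        ≤ ∑ ν ∈ S, ∑ x ∈ Finset.univ.filter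
            (fun x => mutInf (empType n x) W ≤ R - ε), Q ν x := by
      calc (S.card : ℝ) * κ = ∑ _ν ∈ S, κ := by
            rw [Finset.sum_const, nsmul_eq_mul]
        _ ≤ _ := Finset.sum_le_sum (fun ν _ => hall ν)
    rw [hmain _ compat m]
    calc κ = (S.card : ℝ)⁻¹ * ((S.card : ℝ) * κ) := by
          rw [← mul_assoc, inv_mul_cancel₀ hScardne, one_mul]
      _ ≤ (S.card : ℝ)⁻¹ * ∑ ν ∈ S, ∑ x ∈ Finset.univ.filter
            (fun x => mutInf (empType n x) W ≤ R - ε), Q ν x :=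
          mul_le_mul_of_nonneg_left h1 (inv_nonneg.mpr (Nat.cast_nonneg _))
end
end

section
/- (Lemma 3.) For every DMC W, every ID rate R ≥ 0, and all positive constants λ₁, λ₂, ε, κ satisfying λ₁ + λ₂ < κ < 1, there exists η₀ ∈ ℕ such that for every blocklength n ≥ η₀ and every finite set ℳ with |ℳ| = ⌈exp(exp(nR))⌉, if {(Q_m, 𝒟_m)}_{m∈ℳ} is an (n, ℳ, λ₁, λ₂) ID code for W, then (1/|ℳ|) Σ_{m∈ℳ} Q_m({𝐱 ∈ 𝒳ⁿ : I(P_𝐱, W) > R − ε}) > 1 − κ − exp(e^{n(R − ε/2)}) / exp(e^{nR}). -/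
/-!
Let `S` be the set of sequences `x` with `I(P_x, W) ≤ R - ε`, and call a message heavy if `Q_m`
puts mass at least `κ` on `S`. By soft covering, the output of `Q_m` conditioned on `S` is
simulated in `ℓ¹` by a codebook of `M ≈ exp (n (R - 3ε/4))` sequences: by Chebyshev the
information density of a sequence of type `P` rarely exceeds `n I(P, W) + nε/8`, and there are
only polynomially many types. The decoding set `D_m` has probability at least `κ - λ₁` under the
restriction of `Q_m` to `S` and at most `λ₂` under that of any other `Q_{m'}`, so two heavy
messages with nearly the same mass on `S` cannot share a codebook. Hence there are at most
`(L + 1) |X|^{nM} ≤ exp (e^{n(R - ε/2)})` heavy messages, every other message puts mass more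
than `1 - κ` on the complement of `S`, and averaging over the `⌈exp (e^{nR})⌉` messages gives the
bound.
-/

open scoped Classical
open Finset

noncomputable section

section Channel

variable {α β : Type*} [Fintype β] {V : α → β → ℝ}

lemma IsChannel.le_one (hV : IsChannel V) (a : α) (b : β) : V a b ≤ 1 :=
  (single_le_sum (fun b _ => hV.1 a b) (mem_univ b)).trans_eq (hV.2 a)

lemma IsChannel.sum_nonneg (hV : IsChannel V) (a : α) (D : Finset β) : 0 ≤ ∑ b ∈ D, V a b :=
  Finset.sum_nonneg fun b _ => hV.1 a b

lemma IsChannel.sum_sum_mul [Fintype α] (hV : IsChannel V) {P : α → ℝ} (hP : IsPMF P) :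
    ∑ b, ∑ a, P a * V a b = 1 := by
  rw [sum_comm]
  simp [← mul_sum, hV.2, hP.2]

lemma IsChannel.sum_mul_le_one [Fintype α] (hV : IsChannel V) {P : α → ℝ} (hP : IsPMF P) (b : β) :
    ∑ a, P a * V a b ≤ 1 :=
  (sum_le_sum fun a _ => mul_le_of_le_one_right (hP.1 a) (hV.le_one a b)).trans_eq hP.2

lemma IsChannel.exists_pos_le_of_ne_zero [Fintype α] (hV : IsChannel V) :
    ∃ w₀, 0 < w₀ ∧ w₀ ≤ 1 ∧ ∀ a b, V a b ≠ 0 → w₀ ≤ V a b := by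
  set s := univ.filter fun p : α × β => V p.1 p.2 ≠ 0
  have hpos : ∀ p ∈ s, 0 < V p.1 p.2 := fun p hp => (hV.1 _ _).lt_of_ne' (mem_filter.1 hp).2
  refine ⟨∏ p ∈ s, V p.1 p.2, prod_pos hpos,
    prod_le_one (fun p _ => hV.1 _ _) (fun p _ => hV.le_one _ _), fun a b hab => ?_⟩
  have hab' : (a, b) ∈ s := mem_filter.2 ⟨mem_univ _, hab⟩
  rw [← mul_prod_erase s _ hab']
  exact mul_le_of_le_one_right (hV.1 a b)
    (prod_le_one (fun p _ => hV.1 _ _) (fun p _ => hV.le_one _ _))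

lemma IsChannel.wn {X Y : Type*} [Fintype Y] {W : X → Y → ℝ} (hW : IsChannel W) (n : ℕ) :
    IsChannel (Wn W n) :=
  ⟨fun x y => prod_nonneg fun i _ => hW.1 _ _, fun x => by
    unfold Wn
    simp_rw [← Fintype.prod_sum (fun i b => W (x i) b), hW.2, prod_const_one]⟩

end Channel

section ProductWeight

/- Sums over `c : ι → κ` weighted by `∏ i, q i (c i)` are expectations over independent
coordinates `c i ∼ q i`; with `q = fun _ => P` on `Fin M → α` they average over random codebooks
of `M` i.i.d. codewords. -/

variable {ι κ : Type*} [Fintype ι] [DecidableEq ι] [Fintype κ] (q : ι → κ → ℝ)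

lemma sum_prod_mul_prod (g : ι → κ → ℝ) :
    ∑ c : ι → κ, (∏ i, q i (c i)) * ∏ i, g i (c i) = ∏ i, ∑ b, q i b * g i b := by
  simp_rw [← prod_mul_distrib, Fintype.prod_sum]

variable {q}

lemma sum_prod_mul_apply_s8 (hq : ∀ i, ∑ b, q i b = 1) (j : ι) (h : κ → ℝ) :
    ∑ c : ι → κ, (∏ i, q i (c i)) * h (c j) = ∑ b, q j b * h b := by
  have key := sum_prod_mul_prod q (fun i b => if i = j then h b else 1)
  simp only [Fintype.prod_ite_eq', mul_ite, mul_one] at key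
  rw [key, Fintype.prod_eq_single j fun i hi => by simp [hi, hq]]
  simp

lemma sum_prod_mul_mul_apply (hq : ∀ i, ∑ b, q i b = 1) {i j : ι} (hij : i ≠ j)
    (h h' : κ → ℝ) :
    ∑ c : ι → κ, (∏ k, q k (c k)) * (h (c i) * h' (c j))
      = (∑ b, q i b * h b) * ∑ b, q j b * h' b := by
  have key := sum_prod_mul_prod q
    (fun k b => (if k = i then h b else 1) * if k = j then h' b else 1)
  simp only [prod_mul_distrib, Fintype.prod_ite_eq'] at key
  rw [key, prod_eq_mul_of_mem i j (mem_univ i) (mem_univ j) hij fun k _ hk => by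
    simp [hk.1, hk.2, hq]]
  simp [hij, hij.symm]

lemma sum_prod_mul_sum_sq (hq : ∀ i, ∑ b, q i b = 1) (u : ι → κ → ℝ)
    (hu : ∀ i, ∑ b, q i b * u i b = 0) :
    ∑ c : ι → κ, (∏ i, q i (c i)) * (∑ i, u i (c i)) ^ 2 = ∑ i, ∑ b, q i b * u i b ^ 2 := by
  have cross : ∀ i j, ∑ c : ι → κ, (∏ k, q k (c k)) * (u i (c i) * u j (c j))
      = if i = j then ∑ b, q i b * u i b ^ 2 else 0 := by
    intro i j
    split_ifs with hij
    · subst hij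
      simp_rw [← sq]
      exact sum_prod_mul_apply_s8 hq i (fun b => u i b ^ 2)
    · rw [sum_prod_mul_mul_apply hq hij, hu i, zero_mul]
  calc ∑ c : ι → κ, (∏ i, q i (c i)) * (∑ i, u i (c i)) ^ 2
      = ∑ i, ∑ j, ∑ c : ι → κ, (∏ k, q k (c k)) * (u i (c i) * u j (c j)) := by
        simp_rw [sq, sum_mul_sum, mul_sum]
        rw [sum_comm]
        exact sum_congr rfl fun i _ => sum_comm
    _ = ∑ i, ∑ b, q i b * u i b ^ 2 := by simp [cross]

lemma sum_prod_filter_le_of_abs_le (hq0 : ∀ i b, 0 ≤ q i b) (hq : ∀ i, ∑ b, q i b = 1)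
    (u : ι → κ → ℝ) (hu : ∀ i, ∑ b, q i b * u i b = 0) {C t : ℝ} (hC : ∀ i b, |u i b| ≤ C)
    (ht : 0 < t) :
    ∑ c ∈ univ.filter (fun c : ι → κ => t ≤ ∑ i, u i (c i)), ∏ i, q i (c i)
      ≤ Fintype.card ι * C ^ 2 / t ^ 2 := by
  have hw : ∀ c : ι → κ, 0 ≤ ∏ i, q i (c i) := fun c => prod_nonneg fun i _ => hq0 i _
  calc ∑ c ∈ univ.filter (fun c : ι → κ => t ≤ ∑ i, u i (c i)), ∏ i, q i (c i)
      ≤ ∑ c ∈ univ.filter (fun c : ι → κ => t ≤ ∑ i, u i (c i)),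
          (∏ i, q i (c i)) * (∑ i, u i (c i)) ^ 2 / t ^ 2 := by
        refine sum_le_sum fun c hc => ?_
        have ht' : t ^ 2 ≤ (∑ i, u i (c i)) ^ 2 := pow_le_pow_left₀ ht.le (mem_filter.1 hc).2 2
        rw [mul_div_assoc]
        exact le_mul_of_one_le_right (hw c) ((one_le_div (by positivity)).2 ht')
    _ ≤ ∑ c : ι → κ, (∏ i, q i (c i)) * (∑ i, u i (c i)) ^ 2 / t ^ 2 :=
        sum_le_sum_of_subset_of_nonneg (filter_subset _ _) fun c _ _ => by
          have := hw c; positivity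
    _ ≤ Fintype.card ι * C ^ 2 / t ^ 2 := by
        rw [← sum_div, sum_prod_mul_sum_sq hq u hu]
        gcongr
        calc ∑ i, ∑ b, q i b * u i b ^ 2 ≤ ∑ i : ι, ∑ b, q i b * C ^ 2 := by
              refine sum_le_sum fun i _ => sum_le_sum fun b _ => ?_
              exact mul_le_mul_of_nonneg_left (sq_le_sq' (abs_le.1 (hC i b)).1
                (abs_le.1 (hC i b)).2) (hq0 i b)
          _ = Fintype.card ι * C ^ 2 := by simp [← sum_mul, hq]

end ProductWeight

section RandomCodebook

variable {α γ : Type*} [Fintype α] [Fintype γ]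

lemma exists_le_sum_mul [Nonempty γ] {w : γ → ℝ} (hw : IsPMF w) (F : γ → ℝ) :
    ∃ c, F c ≤ ∑ c, w c * F c := by
  obtain ⟨c₀, -, hc₀⟩ := exists_min_image univ F univ_nonempty
  refine ⟨c₀, ?_⟩
  calc F c₀ = ∑ c, w c * F c₀ := by rw [← sum_mul, hw.2, one_mul]
    _ ≤ ∑ c, w c * F c :=
        sum_le_sum fun c _ => mul_le_mul_of_nonneg_left (hc₀ c (mem_univ c)) (hw.1 c)

lemma sum_mul_abs_le_sqrt {w : γ → ℝ} (hw : IsPMF w) (F : γ → ℝ) :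
    ∑ c, w c * |F c| ≤ √(∑ c, w c * F c ^ 2) := by
  have key := Real.sum_mul_le_sqrt_mul_sqrt univ (fun c => √(w c)) (fun c => √(w c) * |F c|)
  simp_rw [mul_pow, Real.sq_sqrt (hw.1 _), sq_abs, hw.2, Real.sqrt_one, one_mul, ← mul_assoc,
    Real.mul_self_sqrt (hw.1 _)] at key
  exact key

lemma IsPMF.prod {ι : Type*} [Fintype ι] [DecidableEq ι] {P : α → ℝ} (hP : IsPMF P) :
    IsPMF fun c : ι → α => ∏ i, P (c i) :=
  ⟨fun c => prod_nonneg fun i _ => hP.1 _, by rw [← Fintype.prod_sum]; simp [hP.2]⟩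

variable {P : α → ℝ} {M : ℕ}

lemma sum_prod_mul_mean (hP : IsPMF P) (hM : 0 < M) (h : α → ℝ) :
    ∑ c : Fin M → α, (∏ j, P (c j)) * ((M : ℝ)⁻¹ * ∑ j, h (c j)) = ∑ a, P a * h a := by
  calc ∑ c : Fin M → α, (∏ j, P (c j)) * ((M : ℝ)⁻¹ * ∑ j, h (c j))
      = (M : ℝ)⁻¹ * ∑ j : Fin M, ∑ c : Fin M → α, (∏ i, P (c i)) * h (c j) := by
        rw [sum_comm, mul_sum]
        refine sum_congr rfl fun c _ => ?_
        rw [mul_sum, mul_sum, mul_sum]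
        exact sum_congr rfl fun j _ => by ring
    _ = ∑ a, P a * h a := by
        simp only [sum_prod_mul_apply_s8 (fun _ => hP.2), sum_const, card_univ, Fintype.card_fin,
          nsmul_eq_mul]
        field_simp

lemma sum_prod_mul_mean_sub_sq_le (hP : IsPMF P) (hM : 0 < M) (h : α → ℝ) :
    ∑ c : Fin M → α, (∏ j, P (c j)) * ((M : ℝ)⁻¹ * ∑ j, h (c j) - ∑ a, P a * h a) ^ 2
      ≤ (M : ℝ)⁻¹ * ∑ a, P a * h a ^ 2 := by
  set m := ∑ a, P a * h a
  have hcentred : ∑ a, P a * (h a - m) = 0 := by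
    simp_rw [mul_sub, sum_sub_distrib, ← sum_mul, hP.2, one_mul]
    exact sub_self m
  have hM' : (M : ℝ) ≠ 0 := by positivity
  have hmean : ∀ c : Fin M → α,
      (M : ℝ)⁻¹ * ∑ j, h (c j) - m = (M : ℝ)⁻¹ * ∑ j, (h (c j) - m) := by
    intro c
    rw [sum_sub_distrib, sum_const, card_univ, Fintype.card_fin, nsmul_eq_mul]
    field_simp
  have hvar : ∑ a, P a * (h a - m) ^ 2 = ∑ a, P a * h a ^ 2 - m ^ 2 := by
    have : ∀ a, P a * (h a - m) ^ 2 = P a * h a ^ 2 - 2 * m * (P a * h a) + m ^ 2 * P a := by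
      intro a; ring
    simp_rw [this, sum_add_distrib, sum_sub_distrib, ← mul_sum, hP.2]
    ring
  calc ∑ c : Fin M → α, (∏ j, P (c j)) * ((M : ℝ)⁻¹ * ∑ j, h (c j) - m) ^ 2
      = (M : ℝ)⁻¹ ^ 2 * ∑ c : Fin M → α, (∏ j, P (c j)) * (∑ j, (h (c j) - m)) ^ 2 := by
        simp_rw [hmean]
        rw [mul_sum]
        exact sum_congr rfl fun c _ => by ring
    _ = (M : ℝ)⁻¹ * ∑ a, P a * (h a - m) ^ 2 := by
        rw [sum_prod_mul_sum_sq (fun _ => hP.2) (fun _ a => h a - m) (fun _ => hcentred)]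
        simp only [inv_pow, sum_const, card_univ, Fintype.card_fin, nsmul_eq_mul]
        field_simp
    _ ≤ (M : ℝ)⁻¹ * ∑ a, P a * h a ^ 2 := by
        rw [hvar]
        gcongr
        linarith [sq_nonneg m]

lemma sum_prod_mul_abs_mean_sub_le_sqrt (hP : IsPMF P) (hM : 0 < M) (h : α → ℝ) :
    ∑ c : Fin M → α, (∏ j, P (c j)) * |(M : ℝ)⁻¹ * ∑ j, h (c j) - ∑ a, P a * h a|
      ≤ √((M : ℝ)⁻¹ * ∑ a, P a * h a ^ 2) :=
  (sum_mul_abs_le_sqrt hP.prod _).trans (Real.sqrt_le_sqrt (sum_prod_mul_mean_sub_sq_le hP hM h))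

lemma abs_add_sub_add_le (a b : ℝ) {x y : ℝ} (hx : 0 ≤ x) (hy : 0 ≤ y) :
    |a + x - (b + y)| ≤ |a - b| + (x + y) := by
  rw [show a + x - (b + y) = (a - b) + (x - y) by ring]
  exact (abs_add_le _ _).trans (by gcongr; exact abs_sub_le_iff.2 ⟨by linarith, by linarith⟩)

/-- Truncating `h` at level `θ` trades the second moment for `θ` times the first moment, at the
cost of twice the mass above the truncation level. -/
lemma sum_prod_mul_abs_mean_sub_le (hP : IsPMF P) (hM : 0 < M) {h : α → ℝ} (h0 : ∀ a, 0 ≤ h a)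
    {θ : ℝ} (hθ : 0 ≤ θ) :
    ∑ c : Fin M → α, (∏ j, P (c j)) * |(M : ℝ)⁻¹ * ∑ j, h (c j) - ∑ a, P a * h a|
      ≤ √(θ * (∑ a, P a * h a) / M)
        + 2 * ∑ a ∈ univ.filter (fun a => θ < h a), P a * h a := by
  set w : (Fin M → α) → ℝ := fun c => ∏ j, P (c j)
  set g : α → ℝ := fun a => if θ < h a then h a else 0
  set f : α → ℝ := fun a => h a - g a
  have hg0 : ∀ a, 0 ≤ g a := fun a => by
    simp only [g]; split_ifs
    exacts [h0 a, le_rfl]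
  have hf_sq : ∀ a, f a ^ 2 ≤ θ * h a := fun a => by
    simp only [f, g]; split_ifs with hθa
    · simpa using mul_nonneg hθ (h0 a)
    · rw [sub_zero, sq]
      exact mul_le_mul_of_nonneg_right (not_lt.1 hθa) (h0 a)
  have hEg : ∑ a, P a * g a = ∑ a ∈ univ.filter (fun a => θ < h a), P a * h a := by
    simp [g, sum_filter, mul_ite]
  have hsplit : ∀ c : Fin M → α, |(M : ℝ)⁻¹ * ∑ j, h (c j) - ∑ a, P a * h a|
      ≤ |(M : ℝ)⁻¹ * ∑ j, f (c j) - ∑ a, P a * f a|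
        + ((M : ℝ)⁻¹ * ∑ j, g (c j) + ∑ a, P a * g a) := fun c => by
    have hmean_g : 0 ≤ (M : ℝ)⁻¹ * ∑ j, g (c j) :=
      mul_nonneg (by positivity) (sum_nonneg fun j _ => hg0 (c j))
    have hEg0 : 0 ≤ ∑ a, P a * g a := sum_nonneg fun a _ => mul_nonneg (hP.1 a) (hg0 a)
    have key := abs_add_sub_add_le ((M : ℝ)⁻¹ * ∑ j, f (c j)) (∑ a, P a * f a) hmean_g hEg0
    simpa only [f, ← mul_add, ← sum_add_distrib, sub_add_cancel] using key
  calc ∑ c, w c * |(M : ℝ)⁻¹ * ∑ j, h (c j) - ∑ a, P a * h a|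
      ≤ ∑ c, w c * (|(M : ℝ)⁻¹ * ∑ j, f (c j) - ∑ a, P a * f a|
          + ((M : ℝ)⁻¹ * ∑ j, g (c j) + ∑ a, P a * g a)) :=
        sum_le_sum fun c _ => mul_le_mul_of_nonneg_left (hsplit c) (hP.prod.1 c)
    _ = ∑ c, w c * |(M : ℝ)⁻¹ * ∑ j, f (c j) - ∑ a, P a * f a| + 2 * ∑ a, P a * g a := by
        simp only [mul_add, sum_add_distrib, sum_prod_mul_mean hP hM, ← sum_mul, hP.prod.2, w]
        ring
    _ ≤ √((M : ℝ)⁻¹ * ∑ a, P a * f a ^ 2) + 2 * ∑ a, P a * g a := by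
        gcongr
        exact sum_prod_mul_abs_mean_sub_le_sqrt hP hM f
    _ ≤ √(θ * (∑ a, P a * h a) / M) + 2 * ∑ a ∈ univ.filter (fun a => θ < h a), P a * h a := by
        rw [hEg]
        gcongr ?_ + _
        refine Real.sqrt_le_sqrt ?_
        rw [inv_mul_eq_div, mul_sum]
        gcongr ?_ / _
        refine sum_le_sum fun a _ => ?_
        rw [mul_left_comm]
        exact mul_le_mul_of_nonneg_left (hf_sq a) (hP.1 a)

end RandomCodebook

section SoftCovering

variable {α β : Type*} [Fintype α] [Fintype β]

theorem exists_codebook_sum_abs_sub_le [Nonempty α] {V : α → β → ℝ} (hV : IsChannel V)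
    {P : α → ℝ} (hP : IsPMF P) {ν : β → ℝ} (hν : ∀ b, 0 ≤ ν b) {M : ℕ} (hM : 0 < M) :
    ∃ c : Fin M → α, ∑ b, |(M : ℝ)⁻¹ * ∑ j, V (c j) b - ∑ a, P a * V a b|
      ≤ √((∑ b, ν b) / M) + 2 * ∑ a, P a * ∑ b ∈ univ.filter (fun b => ν b < V a b), V a b := by
  obtain ⟨c, hc⟩ := exists_le_sum_mul hP.prod fun c : Fin M → α =>
    ∑ b, |(M : ℝ)⁻¹ * ∑ j, V (c j) b - ∑ a, P a * V a b|
  refine ⟨c, hc.trans ?_⟩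
  have hμ0 : ∀ b, 0 ≤ ∑ a, P a * V a b := fun b =>
    Finset.sum_nonneg fun a _ => mul_nonneg (hP.1 a) (hV.1 a b)
  calc ∑ c : Fin M → α, (∏ j, P (c j)) * ∑ b, |(M : ℝ)⁻¹ * ∑ j, V (c j) b - ∑ a, P a * V a b|
      = ∑ b, ∑ c : Fin M → α,
          (∏ j, P (c j)) * |(M : ℝ)⁻¹ * ∑ j, V (c j) b - ∑ a, P a * V a b| := by
        simp_rw [mul_sum]
        exact sum_comm
    _ ≤ ∑ b, (√(ν b * (∑ a, P a * V a b) / M)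
          + 2 * ∑ a ∈ univ.filter (fun a => ν b < V a b), P a * V a b) :=
        sum_le_sum fun b _ => sum_prod_mul_abs_mean_sub_le hP hM (fun a => hV.1 a b) (hν b)
    _ ≤ √((∑ b, ν b) / M) + 2 * ∑ a, P a * ∑ b ∈ univ.filter (fun b => ν b < V a b), V a b := by
        rw [sum_add_distrib, ← mul_sum]
        gcongr
        · calc ∑ b, √(ν b * (∑ a, P a * V a b) / M)
              = ∑ b, √(ν b / M) * √(∑ a, P a * V a b) := by
                refine sum_congr rfl fun b _ => ?_
                rw [← Real.sqrt_mul (by have := hν b; positivity), div_mul_eq_mul_div]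
            _ ≤ √(∑ b, ν b / M) * √(∑ b, ∑ a, P a * V a b) :=
                Real.sum_sqrt_mul_sqrt_le _ (fun b => by have := hν b; positivity) hμ0
            _ = √((∑ b, ν b) / M) := by rw [hV.sum_sum_mul hP, Real.sqrt_one, mul_one, sum_div]
        · simp_rw [sum_filter, mul_sum, mul_ite, mul_zero]
          exact (sum_comm).le

end SoftCovering

section Identification

variable {α β : Type*}

def condOn (Q : α → ℝ) (S : Finset α) (a : α) : ℝ :=
  if a ∈ S then Q a / ∑ a' ∈ S, Q a' else 0

lemma mem_of_condOn_ne_zero {Q : α → ℝ} {S : Finset α} {a : α} (h : condOn Q S a ≠ 0) :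
    a ∈ S := by
  by_contra ha
  exact h (if_neg ha)

variable [Fintype α] [Fintype β] {V : α → β → ℝ}

lemma isPMF_condOn {Q : α → ℝ} (hQ : ∀ a, 0 ≤ Q a) {S : Finset α} (hS : 0 < ∑ a ∈ S, Q a) :
    IsPMF (condOn Q S) := by
  refine ⟨fun a => ?_, ?_⟩
  · unfold condOn; split_ifs
    exacts [div_nonneg (hQ a) hS.le, le_rfl]
  · simp only [condOn, sum_ite_mem, univ_inter, ← sum_div, div_self hS.ne']

lemma sum_mul_eq_mul_sum_condOn (Q F : α → ℝ) {S : Finset α} (hS : ∑ a ∈ S, Q a ≠ 0) :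
    ∑ a ∈ S, Q a * F a = (∑ a ∈ S, Q a) * ∑ a, condOn Q S a * F a := by
  simp only [condOn, ite_mul, zero_mul, sum_ite_mem, univ_inter, mul_sum]
  exact sum_congr rfl fun a _ => by field_simp

lemma abs_sum_mul_sum_sub_le {Q : α → ℝ} (hQ : IsPMF Q) {S : Finset α}
    (hS : 0 < ∑ a ∈ S, Q a) {μ : β → ℝ} {η : ℝ}
    (hμ : ∑ b, |μ b - ∑ a, condOn Q S a * V a b| ≤ η) (D : Finset β) :
    |∑ a ∈ S, Q a * ∑ b ∈ D, V a b - (∑ a ∈ S, Q a) * ∑ b ∈ D, μ b| ≤ η := by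
  have hS1 : ∑ a ∈ S, Q a ≤ 1 :=
    (sum_le_sum_of_subset_of_nonneg (subset_univ S) fun a _ _ => hQ.1 a).trans_eq hQ.2
  rw [sum_mul_eq_mul_sum_condOn Q _ hS.ne', ← mul_sub, abs_mul, abs_of_pos hS, abs_sub_comm]
  calc (∑ a ∈ S, Q a) * |∑ b ∈ D, μ b - ∑ a, condOn Q S a * ∑ b ∈ D, V a b|
      ≤ 1 * ∑ b, |μ b - ∑ a, condOn Q S a * V a b| := by
        gcongr
        simp_rw [mul_sum]
        rw [sum_comm (s := univ), ← sum_sub_distrib]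
        exact (abs_sum_le_sum_abs _ _).trans
          (sum_le_sum_of_subset_of_nonneg (subset_univ D) fun b _ _ => abs_nonneg _)
    _ ≤ η := by rw [one_mul]; exact hμ

lemma abs_sub_lt_one_of_natFloor_eq {x y : ℝ} (hx : 0 ≤ x) (hy : 0 ≤ y) (h : ⌊x⌋₊ = ⌊y⌋₊) :
    |x - y| < 1 := by
  have hx1 := Nat.lt_floor_add_one x
  have hy1 := Nat.lt_floor_add_one y
  have hx2 := Nat.floor_le hx
  have hy2 := Nat.floor_le hy
  rw [h] at hx1 hx2
  rw [abs_sub_lt_iff]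
  constructor <;> linarith

lemma sum_mul_sum_le (hV : IsChannel V) {Q : α → ℝ} (hQ : ∀ a, 0 ≤ Q a) (S : Finset α)
    (D : Finset β) : ∑ a ∈ S, Q a * ∑ b ∈ D, V a b ≤ ∑ a, Q a * ∑ b ∈ D, V a b :=
  sum_le_sum_of_subset_of_nonneg (subset_univ S) fun a _ _ => mul_nonneg (hQ a) (hV.sum_nonneg a _)

lemma sum_sub_le_sum_mul_sum [DecidableEq β] (hV : IsChannel V) {Q : α → ℝ}
    (hQ : ∀ a, 0 ≤ Q a) (S : Finset α) (D : Finset β) :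
    ∑ a ∈ S, Q a - ∑ a, Q a * ∑ b ∈ Dᶜ, V a b ≤ ∑ a ∈ S, Q a * ∑ b ∈ D, V a b := by
  have hcompl : ∀ a, ∑ b ∈ D, V a b = 1 - ∑ b ∈ Dᶜ, V a b := fun a => by
    rw [← hV.2 a, ← sum_add_sum_compl D]; ring
  simp_rw [hcompl, mul_sub, mul_one, sum_sub_distrib]
  linarith [sum_mul_sum_le hV hQ S Dᶜ]

variable {ι : Type*} {Q : ι → α → ℝ} {D : ι → Finset β} {l1 l2 κ : ℝ}

/-- Otherwise `μ` would predict, up to `(κ - l1 - l2) / 4` each, both the probability at least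
`κ - l1` of `D m` under `Q m` restricted to `S` and the probability at most `l2` of `D m` under
`Q m'` restricted to `S`. -/
lemma eq_of_condOn_approx [DecidableEq β] (hV : IsChannel V) (hQ : ∀ m, IsPMF (Q m))
    (hmiss : ∀ m, ∑ a, Q m a * ∑ b ∈ (D m)ᶜ, V a b ≤ l1)
    (hwrong : ∀ m m', m ≠ m' → ∑ a, Q m a * ∑ b ∈ D m', V a b ≤ l2)
    (hκ : 0 < κ) (hδ : 0 < κ - l1 - l2) {S : Finset α} {μ : β → ℝ} (hμ0 : ∀ b, 0 ≤ μ b)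
    (hμ1 : ∑ b, μ b ≤ 1) {m m' : ι} (hm : κ ≤ ∑ a ∈ S, Q m a) (hm' : κ ≤ ∑ a ∈ S, Q m' a)
    (hμm : ∑ b, |μ b - ∑ a, condOn (Q m) S a * V a b| ≤ (κ - l1 - l2) / 4)
    (hμm' : ∑ b, |μ b - ∑ a, condOn (Q m') S a * V a b| ≤ (κ - l1 - l2) / 4)
    (hmm' : |∑ a ∈ S, Q m a - ∑ a ∈ S, Q m' a| ≤ (κ - l1 - l2) / 4) : m = m' := by
  by_contra hne
  set p := ∑ b ∈ D m, μ b
  have hp0 : 0 ≤ p := Finset.sum_nonneg fun b _ => hμ0 b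
  have hp1 : p ≤ 1 :=
    (sum_le_sum_of_subset_of_nonneg (subset_univ _) fun b _ _ => hμ0 b).trans hμ1
  have happrox := abs_le.1 (abs_sum_mul_sum_sub_le (hQ m) (hκ.trans_le hm) hμm (D m))
  have happrox' := abs_le.1 (abs_sum_mul_sum_sub_le (hQ m') (hκ.trans_le hm') hμm' (D m))
  have hhit := (sum_sub_le_sum_mul_sum hV (hQ m).1 S (D m)).trans' (sub_le_sub_left (hmiss m) _)
  have hfalse := (sum_mul_sum_le hV (hQ m').1 S (D m)).trans (hwrong m' m (Ne.symm hne))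
  have hshift : (∑ a ∈ S, Q m a - ∑ a ∈ S, Q m' a) * p ≤ (κ - l1 - l2) / 4 :=
    (mul_le_mul (le_abs_self _) hp1 hp0 (abs_nonneg _)).trans (by rwa [mul_one])
  linarith

/-- A message `m` with mass at least `κ` on `S` is determined by `⌊L · Q m (S)⌋` and `c m`. -/
theorem card_heavy_le [Fintype ι] [DecidableEq β] (hV : IsChannel V) (hQ : ∀ m, IsPMF (Q m))
    (hmiss : ∀ m, ∑ a, Q m a * ∑ b ∈ (D m)ᶜ, V a b ≤ l1)
    (hwrong : ∀ m m', m ≠ m' → ∑ a, Q m a * ∑ b ∈ D m', V a b ≤ l2)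
    (hκ : 0 < κ) (S : Finset α) {M L : ℕ} (hL : 4 ≤ (κ - l1 - l2) * L) (c : ι → Fin M → α)
    (hc : ∀ m, κ ≤ ∑ a ∈ S, Q m a →
      ∑ b, |(M : ℝ)⁻¹ * ∑ j, V (c m j) b - ∑ a, condOn (Q m) S a * V a b| ≤ (κ - l1 - l2) / 4) :
    #(univ.filter fun m => κ ≤ ∑ a ∈ S, Q m a) ≤ (L + 1) * Fintype.card α ^ M := by
  have hL0 : (0 : ℝ) < L := Nat.cast_pos.2 <| Nat.pos_of_ne_zero fun h => by
    rw [h, Nat.cast_zero, mul_zero] at hL; norm_num at hL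
  have hδ : 0 < κ - l1 - l2 := by nlinarith
  have hq1 : ∀ m, ∑ a ∈ S, Q m a ≤ 1 := fun m =>
    (sum_le_sum_of_subset_of_nonneg (subset_univ S) fun a _ _ => (hQ m).1 a).trans_eq (hQ m).2
  have hq0 : ∀ m, 0 ≤ ∑ a ∈ S, Q m a := fun m => Finset.sum_nonneg fun a _ => (hQ m).1 a
  set μ : ι → β → ℝ := fun m b => (M : ℝ)⁻¹ * ∑ j, V (c m j) b
  have hμ0 : ∀ m b, 0 ≤ μ m b := fun m b =>
    mul_nonneg (by positivity) (Finset.sum_nonneg fun j _ => hV.1 _ b)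
  have hμ1 : ∀ m, ∑ b, μ m b ≤ 1 := fun m => by
    simp only [μ, ← mul_sum]
    rw [sum_comm]
    simp_rw [hV.2, sum_const, card_univ, Fintype.card_fin, nsmul_one]
    exact inv_mul_le_one_of_le₀ le_rfl (Nat.cast_nonneg M)
  let F : ι → ℕ × (Fin M → α) := fun m => (⌊(∑ a ∈ S, Q m a) * L⌋₊, c m)
  calc #(univ.filter fun m => κ ≤ ∑ a ∈ S, Q m a)
      ≤ #(range (L + 1) ×ˢ (univ : Finset (Fin M → α))) := by
        refine card_le_card_of_injOn F (fun m _ => ?_) fun m hm m' hm' hF => ?_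
        · simp only [F, coe_product, coe_range, Set.mem_prod, Set.mem_Iio, coe_univ,
            Set.mem_univ, and_true, Nat.lt_succ_iff]
          exact Nat.floor_le_of_le (mul_le_of_le_one_left (Nat.cast_nonneg L) (hq1 m))
        simp only [coe_filter, mem_univ, true_and, Set.mem_ofPred_eq] at hm hm'
        obtain ⟨hfloor, hcm⟩ := Prod.ext_iff.1 hF
        have hclose := abs_sub_lt_one_of_natFloor_eq (mul_nonneg (hq0 m) hL0.le)
          (mul_nonneg (hq0 m') hL0.le) hfloor
        rw [← sub_mul, abs_mul, abs_of_pos hL0] at hclose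
        have hc' : ∑ b, |μ m b - ∑ a, condOn (Q m') S a * V a b| ≤ (κ - l1 - l2) / 4 := by
          simpa only [μ, show c m = c m' from hcm] using hc m' hm'
        exact eq_of_condOn_approx hV hQ hmiss hwrong hκ hδ (hμ0 m) (hμ1 m) hm hm' (hc m hm) hc'
          (by nlinarith)
    _ = (L + 1) * Fintype.card α ^ M := by simp

end Identification

section Types

variable {X : Type*} [Fintype X] {n : ℕ}

lemma empType_nonneg (x : Fin n → X) (a : X) : 0 ≤ empType n x a := by
  unfold empType; positivity

lemma isPMF_empType (hn : 0 < n) (x : Fin n → X) : IsPMF (empType n x) := by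
  have hcount : ∑ a, #(univ.filter fun i => x i = a) = n := by
    rw [← card_eq_sum_card_fiberwise fun i _ => mem_univ (x i), card_univ, Fintype.card_fin]
  refine ⟨empType_nonneg x, ?_⟩
  simp only [empType, ← sum_div]
  rw [← Nat.cast_sum, hcount, div_self (by positivity)]

lemma inv_le_empType_apply (hn : 0 < n) (x : Fin n → X) (i : Fin n) :
    (n : ℝ)⁻¹ ≤ empType n x (x i) := by
  rw [empType, inv_eq_one_div]
  gcongr
  exact Nat.one_le_cast.2 (card_pos.2 ⟨i, mem_filter.2 ⟨mem_univ i, rfl⟩⟩)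

lemma sum_comp_eq_mul_sum_empType (x : Fin n → X) (F : X → ℝ) :
    ∑ i, F (x i) = n * ∑ a, empType n x a * F a := by
  rcases Nat.eq_zero_or_pos n with rfl | hn
  · simp
  rw [← sum_fiberwise' univ x F, mul_sum]
  refine sum_congr rfl fun a _ => ?_
  rw [sum_const, nsmul_eq_mul, empType]
  field_simp

lemma card_image_empType_le :
    #(univ.image (empType (X := X) n)) ≤ (n + 1) ^ Fintype.card X := by
  let count : (Fin n → X) → X → Fin (n + 1) := fun x a =>
    ⟨#(univ.filter fun i => x i = a),
      Nat.lt_succ_of_le ((card_filter_le _ _).trans_eq (by simp))⟩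
  have hfactor : empType (X := X) n
      = (fun k : X → Fin (n + 1) => fun a => ((k a : ℕ) : ℝ) / n) ∘ count := rfl
  rw [hfactor, ← image_image]
  refine card_image_le.trans ?_
  simpa using card_le_univ (univ.image count)

end Types

section InformationDensity

variable {X Y : Type*} [Fintype X] [Fintype Y] {W : X → Y → ℝ} {P : X → ℝ}

def infoDensity (P : X → ℝ) (W : X → Y → ℝ) (a : X) (b : Y) : ℝ :=
  if W a b = 0 then 0 else Real.log (W a b / ∑ a', P a' * W a' b)

def iidOutput (W : X → Y → ℝ) (P : X → ℝ) {n : ℕ} (y : Fin n → Y) : ℝ :=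
  ∏ i, ∑ a, P a * W a (y i)

lemma iidOutput_nonneg (hW : IsChannel W) {P : X → ℝ} (hP : ∀ a, 0 ≤ P a) (y : Fin n → Y) :
    0 ≤ iidOutput W P y :=
  prod_nonneg fun _ _ => Finset.sum_nonneg fun a _ => mul_nonneg (hP a) (hW.1 a _)

lemma mutInf_eq_sum_infoDensity (P : X → ℝ) (W : X → Y → ℝ) :
    mutInf P W = ∑ a, P a * ∑ b, W a b * infoDensity P W a b := by
  simp only [mutInf, mul_sum]
  refine sum_congr rfl fun a _ => sum_congr rfl fun b _ => ?_
  by_cases hW : W a b = 0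
  · simp [infoDensity, hW]
  by_cases hP : P a = 0
  · simp [hP]
  simp [infoDensity, hW, hP, mul_assoc]

lemma mutInf_nonneg (hW : IsChannel W) (hP : IsPMF P) : 0 ≤ mutInf P W := by
  have hPW0 : ∀ b, 0 ≤ ∑ a, P a * W a b := fun b =>
    Finset.sum_nonneg fun a _ => mul_nonneg (hP.1 a) (hW.1 a b)
  have key : ∀ a b, P a * (W a b - ∑ a', P a' * W a' b)
      ≤ P a * (W a b * infoDensity P W a b) := by
    intro a b
    rcases (hP.1 a).eq_or_lt with hPa | hPa
    · simp [← hPa]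
    refine mul_le_mul_of_nonneg_left ?_ hPa.le
    by_cases hab : W a b = 0
    · simpa [infoDensity, hab] using hPW0 b
    have hWpos := (hW.1 a b).lt_of_ne' hab
    have hPWpos : 0 < ∑ a', P a' * W a' b :=
      (mul_pos hPa hWpos).trans_le (single_le_sum (fun a' _ => mul_nonneg (hP.1 a') (hW.1 a' b))
        (mem_univ a))
    have hlog := Real.one_sub_inv_le_log_of_pos (div_pos hWpos hPWpos)
    rw [infoDensity, if_neg hab]
    calc W a b - ∑ a', P a' * W a' b = W a b * (1 - (W a b / ∑ a', P a' * W a' b)⁻¹) := by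
          field_simp
      _ ≤ _ := mul_le_mul_of_nonneg_left hlog hWpos.le
  calc 0 = ∑ a, P a * ∑ b, (W a b - ∑ a', P a' * W a' b) := by
        simp [sum_sub_distrib, hW.2, hW.sum_sum_mul hP]
    _ ≤ mutInf P W := by
        rw [mutInf_eq_sum_infoDensity]
        simp_rw [mul_sum]
        exact sum_le_sum fun a _ => sum_le_sum fun b _ => key a b

lemma abs_infoDensity_le (hW : IsChannel W) (hP : IsPMF P) {a : X} {p₀ w₀ : ℝ} (hp₀ : 0 < p₀)
    (hpa : p₀ ≤ P a) (hw₀ : 0 < w₀) (hw₀1 : w₀ ≤ 1) (hw₀W : ∀ a b, W a b ≠ 0 → w₀ ≤ W a b)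
    (b : Y) : |infoDensity P W a b| ≤ -Real.log p₀ - Real.log w₀ := by
  have hp₀1 : p₀ ≤ 1 :=
    hpa.trans ((single_le_sum (fun a _ => hP.1 a) (mem_univ a)).trans_eq hP.2)
  have hlogp := Real.log_nonpos hp₀.le hp₀1
  have hlogw := Real.log_nonpos hw₀.le hw₀1
  rw [infoDensity]
  split_ifs with hab
  · rw [abs_zero]; linarith
  have hWpos := (hW.1 a b).lt_of_ne' hab
  have hPa := hp₀.trans_le hpa
  have hPW : P a * W a b ≤ ∑ a', P a' * W a' b :=
    single_le_sum (fun a' _ => mul_nonneg (hP.1 a') (hW.1 a' b)) (mem_univ a)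
  have hPWpos := (mul_pos hPa hWpos).trans_le hPW
  have hlogPW := Real.log_le_log (mul_pos hPa hWpos) hPW
  have hlogPW1 := Real.log_nonpos hPWpos.le (hW.sum_mul_le_one hP b)
  have hlogW := Real.log_le_log hw₀ (hw₀W a b hab)
  have hlogPa := Real.log_le_log hp₀ hpa
  rw [Real.log_div hWpos.ne' hPWpos.ne', abs_le]
  rw [Real.log_mul hPa.ne' hWpos.ne'] at hlogPW
  constructor <;> linarith

lemma lt_sum_infoDensity (hW : IsChannel W) (hP : ∀ a, 0 ≤ P a) {n : ℕ} {x : Fin n → X}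
    (hPx : ∀ i, 0 < P (x i)) {y : Fin n → Y} {s : ℝ}
    (h : Real.exp s * iidOutput W P y < Wn W n x y) :
    s < ∑ i, infoDensity P W (x i) (y i) := by
  have hWpos : ∀ i, 0 < W (x i) (y i) := by
    by_contra! hi
    obtain ⟨i, hi⟩ := hi
    have hzero : Wn W n x y = 0 := prod_eq_zero (mem_univ i) (le_antisymm hi (hW.1 _ _))
    have := mul_nonneg (Real.exp_pos s).le (iidOutput_nonneg hW hP y)
    linarith
  have hPWpos : ∀ i, 0 < ∑ a, P a * W a (y i) := fun i =>
    (mul_pos (hPx i) (hWpos i)).trans_le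
      (single_le_sum (fun a _ => mul_nonneg (hP a) (hW.1 a _)) (mem_univ (x i)))
  have hνpos : 0 < iidOutput W P y := prod_pos fun i _ => hPWpos i
  have hsum : ∑ i, infoDensity P W (x i) (y i) = Real.log (Wn W n x y / iidOutput W P y) := by
    rw [Wn, iidOutput, ← prod_div_distrib,
      Real.log_prod fun i _ => (div_pos (hWpos i) (hPWpos i)).ne']
    exact sum_congr rfl fun i _ => if_neg (hWpos i).ne'
  rw [hsum, Real.lt_log_iff_exp_lt (div_pos ((mul_pos (Real.exp_pos s) hνpos).trans h) hνpos),
    lt_div_iff₀ hνpos]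
  exact h

end InformationDensity

section Concentration

variable {X Y : Type*} [Fintype X] [Fintype Y] {W : X → Y → ℝ} {w₀ : ℝ}

/-- Under `Wⁿ(·|x)` the information density `∑ i, infoDensity P W (x i) (y i)` of the type `P` of
`x` is a sum of independent terms with total mean `n I(P, W)`, each bounded by
`log n - log w₀` because `P (x i) ≥ 1/n`; Chebyshev's inequality bounds its upper tail. -/
theorem sum_wn_atypical_le (hW : IsChannel W) (hw₀ : 0 < w₀) (hw₀1 : w₀ ≤ 1)
    (hw₀W : ∀ a b, W a b ≠ 0 → w₀ ≤ W a b) {n : ℕ} (hn : 0 < n) (x : Fin n → X) {t : ℝ}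
    (ht : 0 < t) :
    ∑ y ∈ univ.filter (fun y => Real.exp (n * mutInf (empType n x) W + t)
        * iidOutput W (empType n x) y < Wn W n x y), Wn W n x y
      ≤ n * (2 * (Real.log n - Real.log w₀)) ^ 2 / t ^ 2 := by
  set P := empType n x
  have hP := isPMF_empType hn x
  have hn' : (0 : ℝ) < (n : ℝ)⁻¹ := by positivity
  have hbound : ∀ i b, |infoDensity P W (x i) b| ≤ Real.log n - Real.log w₀ := fun i b => by
    simpa [Real.log_inv] using
      abs_infoDensity_le hW hP hn' (inv_le_empType_apply hn x i) hw₀ hw₀1 hw₀W b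
  set d : X → ℝ := fun a => ∑ b, W a b * infoDensity P W a b
  have hd : ∀ i, |d (x i)| ≤ Real.log n - Real.log w₀ := fun i => calc
    |d (x i)| ≤ ∑ b, W (x i) b * |infoDensity P W (x i) b| := by
        refine (abs_sum_le_sum_abs _ _).trans_eq (sum_congr rfl fun b _ => ?_)
        rw [abs_mul, abs_of_nonneg (hW.1 _ b)]
    _ ≤ ∑ b, W (x i) b * (Real.log n - Real.log w₀) :=
        sum_le_sum fun b _ => mul_le_mul_of_nonneg_left (hbound i b) (hW.1 _ b)
    _ = Real.log n - Real.log w₀ := by rw [← sum_mul, hW.2, one_mul]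
  set u : Fin n → Y → ℝ := fun i b => infoDensity P W (x i) b - d (x i)
  have hu : ∀ i, ∑ b, W (x i) b * u i b = 0 := fun i => by
    simp only [u, mul_sub, sum_sub_distrib, ← sum_mul, hW.2, one_mul, d, sub_self]
  have hu_le : ∀ i b, |u i b| ≤ 2 * (Real.log n - Real.log w₀) := fun i b =>
    (abs_sub _ _).trans (by linarith [hbound i b, hd i])
  have hsum_d : ∑ i, d (x i) = n * mutInf P W := by
    rw [sum_comp_eq_mul_sum_empType x d, mutInf_eq_sum_infoDensity]
  have hsub : univ.filter (fun y => Real.exp (n * mutInf P W + t) * iidOutput W P y < Wn W n x y)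
      ⊆ univ.filter (fun y : Fin n → Y => t ≤ ∑ i, u i (y i)) := by
    intro y hy
    have := lt_sum_infoDensity hW hP.1 (fun i => hn'.trans_le (inv_le_empType_apply hn x i))
      (mem_filter.1 hy).2
    simp only [u, mem_filter, mem_univ, true_and, sum_sub_distrib, hsum_d]
    linarith
  calc _ ≤ ∑ y ∈ univ.filter (fun y : Fin n → Y => t ≤ ∑ i, u i (y i)), Wn W n x y :=
        sum_le_sum_of_subset_of_nonneg hsub fun y _ _ => (hW.wn n).1 x y
    _ ≤ _ := by
        simpa only [Fintype.card_fin, Wn] using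
          sum_prod_filter_le_of_abs_le (fun i => hW.1 (x i)) (fun i => hW.2 (x i)) u hu hu_le ht

end Concentration

section ChannelSoftCovering

variable {X Y : Type*} [Fintype X] [Fintype Y] {W : X → Y → ℝ} {n : ℕ}

def typeMixtureOutput (W : X → Y → ℝ) (n : ℕ) (y : Fin n → Y) : ℝ :=
  ∑ P ∈ univ.image (empType (X := X) n), iidOutput W P y

lemma sum_iidOutput (hW : IsChannel W) {P : X → ℝ} (hP : IsPMF P) :
    ∑ y : Fin n → Y, iidOutput W P y = 1 := by
  simp_rw [iidOutput, ← Fintype.prod_sum (fun i b => ∑ a, P a * W a b), hW.sum_sum_mul hP,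
    prod_const_one]

lemma typeMixtureOutput_nonneg (hW : IsChannel W) (y : Fin n → Y) :
    0 ≤ typeMixtureOutput W n y :=
  Finset.sum_nonneg fun P hP => by
    obtain ⟨x, -, rfl⟩ := mem_image.1 hP
    exact iidOutput_nonneg hW (empType_nonneg x) y

lemma iidOutput_le_typeMixtureOutput (hW : IsChannel W) (x : Fin n → X) (y : Fin n → Y) :
    iidOutput W (empType n x) y ≤ typeMixtureOutput W n y :=
  single_le_sum (f := fun P => iidOutput W P y) (fun P hP => by
    obtain ⟨x', -, rfl⟩ := mem_image.1 hP
    exact iidOutput_nonneg hW (empType_nonneg x') y) (mem_image_of_mem _ (mem_univ x))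

lemma sum_typeMixtureOutput (hW : IsChannel W) (hn : 0 < n) :
    ∑ y : Fin n → Y, typeMixtureOutput W n y = #(univ.image (empType (X := X) n)) := by
  unfold typeMixtureOutput
  rw [sum_comm, card_eq_sum_ones, Nat.cast_sum]
  refine sum_congr rfl fun P hP => ?_
  obtain ⟨x, -, rfl⟩ := mem_image.1 hP
  simp [sum_iidOutput hW (isPMF_empType hn x)]

/-- Soft covering with truncation level `exp (n r + t)` times the sum of `(PW)ⁿ` over all types:
its total mass is `exp (n r + t)` times the number of types, and `Wⁿ(·|x)` exceeds it only on the
atypical set of `sum_wn_atypical_le`. -/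
theorem exists_codebook_of_mutInf_le [Nonempty X] (hW : IsChannel W) {w₀ : ℝ} (hw₀ : 0 < w₀)
    (hw₀1 : w₀ ≤ 1) (hw₀W : ∀ a b, W a b ≠ 0 → w₀ ≤ W a b) (hn : 0 < n)
    {P : (Fin n → X) → ℝ} (hP : IsPMF P) {r t : ℝ} (ht : 0 < t)
    (hPr : ∀ x, P x ≠ 0 → mutInf (empType n x) W ≤ r) {M : ℕ} (hM : 0 < M) :
    ∃ c : Fin M → Fin n → X, ∑ y, |(M : ℝ)⁻¹ * ∑ j, Wn W n (c j) y - ∑ x, P x * Wn W n x y|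
      ≤ √(Real.exp (n * r + t) * (n + 1) ^ Fintype.card X / M)
        + 2 * (n * (2 * (Real.log n - Real.log w₀)) ^ 2 / t ^ 2) := by
  obtain ⟨c, hc⟩ := exists_codebook_sum_abs_sub_le (hW.wn n) hP
    (ν := fun y => Real.exp (n * r + t) * typeMixtureOutput W n y)
    (fun y => mul_nonneg (Real.exp_pos _).le (typeMixtureOutput_nonneg hW y)) hM
  refine ⟨c, hc.trans (add_le_add (Real.sqrt_le_sqrt ?_) ?_)⟩
  · rw [← mul_sum, sum_typeMixtureOutput hW hn]
    gcongr
    exact_mod_cast card_image_empType_le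
  · gcongr
    calc _ ≤ ∑ x, P x * (n * (2 * (Real.log n - Real.log w₀)) ^ 2 / t ^ 2) := by
          refine sum_le_sum fun x _ => ?_
          rcases eq_or_ne (P x) 0 with hx | hx
          · simp [hx]
          refine mul_le_mul_of_nonneg_left ((sum_le_sum_of_subset_of_nonneg (fun y hy => ?_)
            fun y _ _ => (hW.wn n).1 x y).trans (sum_wn_atypical_le hW hw₀ hw₀1 hw₀W hn x ht))
            (hP.1 x)
          simp only [mem_filter, mem_univ, true_and] at hy ⊢
          refine lt_of_le_of_lt ?_ hy
          have := hPr x hx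
          gcongr
          · exact iidOutput_nonneg hW (empType_nonneg x) y
          · exact iidOutput_le_typeMixtureOutput hW x y
      _ = _ := by rw [← sum_mul, hP.2, one_mul]

theorem exists_codebook_condOn_of_mutInf_le [Nonempty X] (hW : IsChannel W) {w₀ : ℝ}
    (hw₀ : 0 < w₀) (hw₀1 : w₀ ≤ 1) (hw₀W : ∀ a b, W a b ≠ 0 → w₀ ≤ W a b) (hn : 0 < n)
    {Q : (Fin n → X) → ℝ} (hQ : IsPMF Q) {S : Finset (Fin n → X)} (hQS : 0 < ∑ x ∈ S, Q x)
    {r t : ℝ} (hS : ∀ x ∈ S, mutInf (empType n x) W ≤ r) (ht : 0 < t) {M : ℕ} (hM : 0 < M) :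
    ∃ c : Fin M → Fin n → X,
      ∑ y, |(M : ℝ)⁻¹ * ∑ j, Wn W n (c j) y - ∑ x, condOn Q S x * Wn W n x y|
        ≤ √(Real.exp (n * r + t) * (n + 1) ^ Fintype.card X / M)
          + 2 * (n * (2 * (Real.log n - Real.log w₀)) ^ 2 / t ^ 2) :=
  exists_codebook_of_mutInf_le hW hw₀ hw₀1 hw₀W hn (isPMF_condOn hQ.1 hQS) ht
    (fun x hx => hS x (mem_of_condOn_ne_zero hx)) hM

end ChannelSoftCovering

section Asymptotics

open Filter Topology

lemma tendsto_pow_mul_exp_neg_mul (d : ℕ) {c : ℝ} (hc : 0 < c) :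
    Tendsto (fun n : ℕ => ((n : ℝ) + 1) ^ d * Real.exp (-(c * n))) atTop (𝓝 0) := by
  have hlim := ((Real.tendsto_pow_mul_exp_neg_atTop_nhds_zero d).comp <|
    (tendsto_atTop_add_const_right _ 1 tendsto_natCast_atTop_atTop).const_mul_atTop hc).const_mul
      (Real.exp c / c ^ d)
  rw [mul_zero] at hlim
  refine hlim.congr fun n => ?_
  have hexp : Real.exp (-(c * ((n : ℝ) + 1))) = Real.exp (-(c * n)) * (Real.exp c)⁻¹ := by
    rw [← Real.exp_neg, ← Real.exp_add]; ring_nf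
  simp only [Function.comp_apply, mul_pow, hexp]
  field_simp

lemma tendsto_log_sub_sq_div (a : ℝ) :
    Tendsto (fun n : ℕ => (Real.log n - a) ^ 2 / n) atTop (𝓝 0) := by
  have h2 := Real.tendsto_pow_log_div_mul_add_atTop 1 0 2 one_ne_zero
  have h1 := Real.tendsto_pow_log_div_mul_add_atTop 1 0 1 one_ne_zero
  have h0 : Tendsto (fun x : ℝ => a ^ 2 / x) atTop (𝓝 0) := tendsto_const_nhds.div_atTop tendsto_id
  simp only [one_mul, add_zero, pow_one] at h1 h2
  have hlim := ((h2.sub (h1.const_mul (2 * a))).add h0).comp tendsto_natCast_atTop_atTop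
  rw [mul_zero, sub_zero, add_zero] at hlim
  exact hlim.congr fun n => by simp only [Function.comp_apply]; ring

lemma eventually_softCovering_error_le {R ε w₀ η : ℝ} (hε : 0 < ε) (hη : 0 < η) (d : ℕ) :
    ∀ᶠ n : ℕ in atTop,
      √(Real.exp (n * (R - ε) + n * (ε / 8)) * (n + 1) ^ d / ⌈Real.exp (n * (R - 3 * ε / 4))⌉₊)
        + 2 * (n * (2 * (Real.log n - Real.log w₀)) ^ 2 / (n * (ε / 8)) ^ 2) ≤ η := by
  filter_upwards [(tendsto_pow_mul_exp_neg_mul d (by positivity : 0 < ε / 8)).eventually_le_const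
      (by positivity : 0 < (η / 2) ^ 2),
    (tendsto_log_sub_sq_div (Real.log w₀)).eventually_le_const
      (by positivity : 0 < η * ε ^ 2 / 1024),
    eventually_gt_atTop 0] with n hexp hlog hn
  have hn' : (0 : ℝ) < n := by exact_mod_cast hn
  have hsqrt : Real.exp (n * (R - ε) + n * (ε / 8)) * (n + 1) ^ d
      / ⌈Real.exp (n * (R - 3 * ε / 4))⌉₊ ≤ (η / 2) ^ 2 := by
    refine le_trans ?_ hexp
    calc _ ≤ Real.exp (n * (R - ε) + n * (ε / 8)) * (n + 1) ^ d
          / Real.exp (n * (R - 3 * ε / 4)) := by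
          gcongr
          exact Nat.le_ceil _
      _ = ((n : ℝ) + 1) ^ d * Real.exp (-(ε / 8 * n)) := by
          rw [mul_comm, mul_div_assoc, ← Real.exp_sub]
          ring_nf
  have hsecond : 2 * (n * (2 * (Real.log n - Real.log w₀)) ^ 2 / (n * (ε / 8)) ^ 2)
      = 512 / ε ^ 2 * ((Real.log n - Real.log w₀) ^ 2 / n) := by
    field_simp
    ring
  calc _ ≤ η / 2 + 512 / ε ^ 2 * (η * ε ^ 2 / 1024) := by
        rw [hsecond]
        gcongr
        exact Real.sqrt_le_sqrt hsqrt |>.trans_eq (Real.sqrt_sq (by positivity))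
    _ = η := by field_simp; ring

lemma eventually_mul_pow_le_exp_exp {R ε : ℝ} (hε : 0 < ε) (hεR : ε ≤ R) (L d : ℕ) (hd : 0 < d) :
    ∀ᶠ n : ℕ in atTop, ((L : ℝ) + 1) * (d : ℝ) ^ (n * ⌈Real.exp (n * (R - 3 * ε / 4))⌉₊)
      ≤ Real.exp (Real.exp (n * (R - ε / 2))) := by
  set A := Real.log (L + 1) + 2 * Real.log d
  have hlogL : 0 ≤ Real.log (L + 1) := Real.log_nonneg (by simp)
  have hlogd : 0 ≤ Real.log d := Real.log_nonneg (by exact_mod_cast hd)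
  filter_upwards [(tendsto_pow_mul_exp_neg_mul 1 (by positivity : 0 < ε / 4)).eventually_le_const
      (by positivity : 0 < (A + 1)⁻¹)] with n hn
  set S := Real.exp (n * (R - 3 * ε / 4))
  have hS : 1 ≤ S := Real.one_le_exp (by have := n.cast_nonneg (α := ℝ); nlinarith)
  have hM : (⌈S⌉₊ : ℝ) ≤ 2 * S := by linarith [Nat.ceil_lt_add_one (Real.exp_pos _).le (a := S)]
  have hlin : (A + 1) * (n + 1) ≤ Real.exp (ε / 4 * n) := by
    rwa [pow_one, Real.exp_neg, mul_inv_le_iff₀ (Real.exp_pos _), le_inv_mul_iff₀ (by positivity)]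
      at hn
  calc ((L : ℝ) + 1) * (d : ℝ) ^ (n * ⌈S⌉₊)
      = Real.exp (Real.log (L + 1) + n * ⌈S⌉₊ * Real.log d) := by
        rw [Real.exp_add, Real.exp_log (by positivity), ← Real.rpow_natCast,
          Real.rpow_def_of_pos (by exact_mod_cast hd)]
        push_cast
        ring_nf
    _ ≤ Real.exp (S * Real.exp (ε / 4 * n)) := by
        gcongr
        calc Real.log (L + 1) + n * ⌈S⌉₊ * Real.log d
            ≤ S * (Real.log (L + 1) + 2 * Real.log d * n) := by
              have := mul_le_mul_of_nonneg_left hM (by positivity : (0 : ℝ) ≤ n * Real.log d)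
              nlinarith
          _ ≤ S * ((A + 1) * (n + 1)) := by
              gcongr
              have := n.cast_nonneg (α := ℝ)
              nlinarith
          _ ≤ S * Real.exp (ε / 4 * n) := by gcongr
    _ = Real.exp (Real.exp (n * (R - ε / 2))) := by
        rw [← Real.exp_add]
        ring_nf

end Asymptotics

lemma one_sub_sub_div_lt_avg {ι A : Type*} [Fintype ι] [Fintype A] [DecidableEq A]
    {Q : ι → A → ℝ} (hQ : ∀ m, IsPMF (Q m)) (G : Finset A) {κ N K : ℝ} (hκ0 : 0 < κ)
    (hκ1 : κ < 1) (hN : 0 < N) (hK : 0 < K) (hKι : K ≤ Fintype.card ι)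
    (hbad : #(univ.filter fun m => κ ≤ ∑ a ∈ Gᶜ, Q m a) ≤ N) :
    1 - κ - N / K < (Fintype.card ι : ℝ)⁻¹ * ∑ m, ∑ a ∈ G, Q m a := by
  set bad := univ.filter fun m => κ ≤ ∑ a ∈ Gᶜ, Q m a
  have hpt : ∀ m, (1 - κ) * (1 - if m ∈ bad then 1 else 0) ≤ ∑ a ∈ G, Q m a := by
    intro m
    have hsplit := sum_add_sum_compl G (Q m)
    rw [(hQ m).2] at hsplit
    split_ifs with hm
    · simpa using Finset.sum_nonneg fun a _ => (hQ m).1 a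
    · simp only [bad, mem_filter, mem_univ, true_and, not_le] at hm
      linarith
  have hsum : (1 - κ) * (Fintype.card ι - #bad) ≤ ∑ m, ∑ a ∈ G, Q m a := by
    refine le_trans (le_of_eq ?_) (sum_le_sum fun m _ => hpt m)
    simp [← mul_sum, sum_sub_distrib]
  have hk : 0 < (Fintype.card ι : ℝ) := hK.trans_le hKι
  calc 1 - κ - N / K ≤ 1 - κ - N / Fintype.card ι := by gcongr
    _ < (1 - κ) * (1 - N / Fintype.card ι) := by
        have : 0 < κ * (N / Fintype.card ι) := by positivity
        linarith
    _ ≤ (1 - κ) * (1 - #bad / Fintype.card ι) := by gcongr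
    _ ≤ (Fintype.card ι : ℝ)⁻¹ * ∑ m, ∑ a ∈ G, Q m a := by
        rw [inv_mul_eq_div, le_div_iff₀ hk]
        refine le_trans (le_of_eq ?_) hsum
        field_simp

open Filter in
theorem eventually_card_heavy_le {X Y : Type*} [Fintype X] [Fintype Y] [Nonempty X]
    {W : X → Y → ℝ} (hW : IsChannel W) {R ε l1 l2 κ : ℝ} (hε : 0 < ε) (hκ : 0 < κ)
    (hsum : l1 + l2 < κ) :
    ∀ᶠ n : ℕ in atTop, ∀ (k : ℕ) (Q : Fin k → (Fin n → X) → ℝ) (D : Fin k → Finset (Fin n → Y)),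
      IsIDCode n W Q D l1 l2 →
      (#(univ.filter fun m =>
          κ ≤ ∑ x ∈ (univ.filter fun x => R - ε < mutInf (empType n x) W)ᶜ, Q m x) : ℝ)
        ≤ Real.exp (Real.exp (n * (R - ε / 2))) := by
  rcases lt_or_ge R ε with hRε | hεR
  · filter_upwards [eventually_gt_atTop 0] with n hn k Q D _
    have hlow : (univ.filter fun x : Fin n → X => R - ε < mutInf (empType n x) W)ᶜ = ∅ := by
      rw [filter_true_of_mem fun x _ => by linarith [mutInf_nonneg hW (isPMF_empType hn x)],
        compl_univ]
    simp only [hlow, sum_empty, hκ.not_ge, filter_false, card_empty, Nat.cast_zero]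
    positivity
  obtain ⟨w₀, hw₀, hw₀1, hw₀W⟩ := hW.exists_pos_le_of_ne_zero
  have hδ : 0 < κ - l1 - l2 := by linarith
  filter_upwards [eventually_softCovering_error_le (R := R) (w₀ := w₀) hε
      (by positivity : 0 < (κ - l1 - l2) / 4) (Fintype.card X),
    eventually_mul_pow_le_exp_exp hε hεR ⌈4 / (κ - l1 - l2)⌉₊ (Fintype.card X) Fintype.card_pos,
    eventually_gt_atTop 0] with n herr hcount hn k Q D hcode
  set S := (univ.filter fun x : Fin n → X => R - ε < mutInf (empType n x) W)ᶜ
  set M := ⌈Real.exp (n * (R - 3 * ε / 4))⌉₊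
  have hS : ∀ x ∈ S, mutInf (empType n x) W ≤ R - ε := fun x hx => by
    simpa only [S, mem_compl, mem_filter, mem_univ, true_and, not_lt] using hx
  have hcover : ∀ m, ∃ c : Fin M → Fin n → X, κ ≤ ∑ x ∈ S, Q m x →
      ∑ y, |(M : ℝ)⁻¹ * ∑ j, Wn W n (c j) y - ∑ x, condOn (Q m) S x * Wn W n x y|
        ≤ (κ - l1 - l2) / 4 := fun m => by
    by_cases hm : κ ≤ ∑ x ∈ S, Q m x
    · obtain ⟨c, hc⟩ := exists_codebook_condOn_of_mutInf_le hW hw₀ hw₀1 hw₀W hn (hcode.1 m)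
        (hκ.trans_le hm) hS (t := n * (ε / 8)) (by positivity) (Nat.ceil_pos.2 (Real.exp_pos _))
      exact ⟨c, fun _ => hc.trans herr⟩
    · exact ⟨Classical.arbitrary _, fun h => absurd h hm⟩
  choose c hc using hcover
  have hL : 4 ≤ (κ - l1 - l2) * ⌈4 / (κ - l1 - l2)⌉₊ := by
    rw [← div_le_iff₀' hδ]
    exact Nat.le_ceil _
  have hheavy := card_heavy_le (hW.wn n) hcode.1 hcode.2.1 hcode.2.2 hκ S hL c hc
  rw [Fintype.card_fun, Fintype.card_fin, ← pow_mul] at hheavy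
  refine le_trans ?_ hcount
  exact_mod_cast hheavy

theorem avg_mass_on_high_mutinf_types_general
    {X Y : Type} [Fintype X] [Fintype Y] [Nonempty X]
    (W : X → Y → ℝ) (hW : IsChannel W)
    (R : ℝ)
    (l1 l2 ε κ : ℝ) (hε : 0 < ε) (hκ0 : 0 < κ)
    (hsum : l1 + l2 < κ) (hκ1 : κ < 1) :
    ∃ η₀ : ℕ, ∀ n : ℕ, η₀ ≤ n →
      ∀ k : ℕ, k = Nat.ceil (Real.exp (Real.exp (n * R))) →
        ∀ (Q : Fin k → (Fin n → X) → ℝ) (D : Fin k → Finset (Fin n → Y)),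
          IsIDCode n W Q D l1 l2 →
          1 - κ - Real.exp (Real.exp (n * (R - ε / 2))) / Real.exp (Real.exp (n * R))
            < (k : ℝ)⁻¹ *
              ∑ m, ∑ x ∈ Finset.univ.filter (fun x => R - ε < mutInf (empType n x) W),
                Q m x := by
  obtain ⟨η₀, hη₀⟩ := Filter.eventually_atTop.1 (eventually_card_heavy_le hW hε hκ0 hsum (R := R))
  refine ⟨η₀, fun n hn k hk Q D hcode => ?_⟩
  have hK : Real.exp (Real.exp (n * R)) ≤ Fintype.card (Fin k) := by
    rw [Fintype.card_fin, hk]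
    exact Nat.le_ceil _
  have := one_sub_sub_div_lt_avg hcode.1 (univ.filter fun x => R - ε < mutInf (empType n x) W)
    hκ0 hκ1 (Real.exp_pos (Real.exp (n * (R - ε / 2)))) (Real.exp_pos (Real.exp (n * R))) hK
    (hη₀ n hn k Q D hcode)
  rwa [Fintype.card_fin] at this

/-- **Lemma 3.** For every DMC `W`, rate `R ≥ 0`, and positive
`λ₁, λ₂, ε, κ` with `λ₁ + λ₂ < κ < 1`, for all large enough blocklengths `n`
every `(n, ℳ, λ₁, λ₂)` ID code with `|ℳ| = ⌈exp(exp(nR))⌉` places, on average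
over the messages, mass more than `1 - κ - exp(e^{n(R-ε/2)})/exp(e^{nR})` on
sequences `𝐱` with `I(P_𝐱, W) > R - ε`. -/
theorem avg_mass_on_high_mutinf_types
    {X Y : Type} [Fintype X] [Fintype Y] [Nonempty X] [Nonempty Y]
    (W : X → Y → ℝ) (hW : IsChannel W)
    (R : ℝ) (hR : 0 ≤ R)
    (l1 l2 ε κ : ℝ) (h1 : 0 < l1) (h2 : 0 < l2) (hε : 0 < ε) (hκ0 : 0 < κ)
    (hsum : l1 + l2 < κ) (hκ1 : κ < 1) :
    ∃ η₀ : ℕ, ∀ n : ℕ, η₀ ≤ n →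
      ∀ k : ℕ, k = Nat.ceil (Real.exp (Real.exp (n * R))) →
        ∀ (Q : Fin k → (Fin n → X) → ℝ) (D : Fin k → Finset (Fin n → Y)),
          IsIDCode n W Q D l1 l2 →
          1 - κ - Real.exp (Real.exp (n * (R - ε / 2))) / Real.exp (Real.exp (n * R))
            < (k : ℝ)⁻¹ *
              ∑ m, ∑ x ∈ Finset.univ.filter (fun x => R - ε < mutInf (empType n x) W),
                Q m x :=
  avg_mass_on_high_mutinf_types_general W hW R l1 l2 ε κ hε hκ0 hsum hκ1
end
end
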